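/- arXiv:1008.0841 — 6 statements merged into one kernel-verified Lean document; each statement's English description precedes it below -/
import Mathlib

section
/- Let $K(s,t)$ be $C^1$ on $[a,b]\times[a,b]$ and $f$ continuous on $[a,b]$. Then the Volterra integral equation $\varphi(s) + \int_a^s K(s,t)\varphi(t)\,dt = f(s)$ has a continuous solution $\varphi$ on $[a,b]$. -/
open MeasureTheory Set intervalIntegral

set_option maxHeartbeats 1000000 in
/-- Existence of a continuous solution of the Volterra integral equation of the second kind. -/
theorem volterra_existence {a b : ℝ} (hab : a < b) (K : ℝ → ℝ → ℝ) (f : ℝ → ℝ)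
    (hK : ContDiffOn ℝ 1 (fun p : ℝ × ℝ => K p.1 p.2) (Icc a b ×ˢ Icc a b))
    (hf : ContinuousOn f (Icc a b)) :
    ∃ φ : ℝ → ℝ, ContinuousOn φ (Icc a b) ∧
      ∀ s ∈ Icc a b, φ s + ∫ t in a..s, K s t * φ t = f s := by
  classical
  have hab' : a ≤ b := hab.le
  -- the retraction onto `Icc a b`
  set g : ℝ → ℝ := fun x => (projIcc a b hab' x : ℝ) with hgdef
  have hg : Continuous g := continuous_subtype_val.comp (continuous_projIcc)
  have hg_mem : ∀ x, g x ∈ Icc a b := fun x => (projIcc a b hab' x).2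
  have hg_id : ∀ x ∈ Icc a b, g x = x := fun x hx => by
    simp [hgdef, projIcc_of_mem hab' hx]
  -- globally continuous extensions of `K` and `f`
  set K' : ℝ → ℝ → ℝ := fun s t => K (g s) (g t) with hK'def
  have hKc : ContinuousOn (fun p : ℝ × ℝ => K p.1 p.2) (Icc a b ×ˢ Icc a b) :=
    hK.continuousOn
  have hK'c : Continuous fun p : ℝ × ℝ => K' p.1 p.2 := by
    refine hKc.comp_continuous ((hg.comp continuous_fst).prodMk (hg.comp continuous_snd)) ?_
    exact fun p => ⟨hg_mem _, hg_mem _⟩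
  set f' : ℝ → ℝ := fun s => f (g s) with hf'def
  have hf'c : Continuous f' := hf.comp_continuous hg hg_mem
  -- a uniform bound on `K'`
  obtain ⟨C, hC⟩ := (isCompact_Icc.prod isCompact_Icc).exists_bound_of_continuousOn hKc
  set M : ℝ := max C 0 with hMdef
  have hM0 : 0 ≤ M := le_max_right _ _
  have hMK : ∀ s t : ℝ, |K' s t| ≤ M := by
    intro s t
    have := hC (g s, g t) ⟨hg_mem s, hg_mem t⟩
    simp only [Real.norm_eq_abs] at this
    exact le_trans this (le_max_left _ _)
  -- the function space and the Volterra operator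
  set u : C(Icc a b, ℝ) → ℝ → ℝ := fun φ t => φ (projIcc a b hab' t) with hudef
  have huc : ∀ φ, Continuous (u φ) := fun φ => φ.continuous.comp continuous_projIcc
  have hFc : ∀ φ : C(Icc a b, ℝ), Continuous fun p : ℝ × ℝ => K' p.1 p.2 * u φ p.2 :=
    fun φ => hK'c.mul ((huc φ).comp continuous_snd)
  have hInt : ∀ (φ : C(Icc a b, ℝ)) (s x y : ℝ),
      IntervalIntegrable (fun t => K' s t * u φ t) volume x y := by
    intro φ s x y
    exact ((hFc φ).comp (Continuous.prodMk_right s)).intervalIntegrable _ _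
  set T : C(Icc a b, ℝ) → C(Icc a b, ℝ) := fun φ =>
    ⟨fun s => f' s - ∫ t in a..(s : ℝ), K' s t * u φ t, by
      refine (hf'c.comp continuous_subtype_val).sub ?_
      exact intervalIntegral.continuous_parametric_intervalIntegral_of_continuous
        (f := fun (s : Icc a b) t => K' (s : ℝ) t * u φ t) (μ := volume)
        ((hFc φ).comp (continuous_subtype_val.prodMap continuous_id)) continuous_subtype_val⟩
    with hTdef
  have hT_apply : ∀ φ (s : Icc a b),
      T φ s = f' s - ∫ t in a..(s : ℝ), K' s t * u φ t := fun φ s => rfl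
  -- key iterate estimate
  have key : ∀ n : ℕ, ∀ φ ψ : C(Icc a b, ℝ), ∀ s : Icc a b,
      |T^[n] φ s - T^[n] ψ s| ≤ M ^ n * ((s : ℝ) - a) ^ n / n.factorial * dist φ ψ := by
    intro n
    induction n with
    | zero =>
      intro φ ψ s
      simpa [Real.dist_eq] using ContinuousMap.dist_apply_le_dist (f := φ) (g := ψ) s
    | succ n ih =>
      intro φ ψ s
      have hs : (s : ℝ) ∈ Icc a b := s.2
      have has : a ≤ (s : ℝ) := hs.1
      set D := dist φ ψ with hD
      have hD0 : 0 ≤ D := dist_nonneg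
      rw [Function.iterate_succ_apply', Function.iterate_succ_apply']
      rw [hT_apply, hT_apply]
      have e1 : (f' s - ∫ t in a..(s : ℝ), K' s t * u (T^[n] φ) t) -
            (f' s - ∫ t in a..(s : ℝ), K' s t * u (T^[n] ψ) t)
          = ∫ t in a..(s : ℝ),
              (K' s t * u (T^[n] ψ) t - K' s t * u (T^[n] φ) t) := by
        rw [intervalIntegral.integral_sub (hInt _ _ _ _) (hInt _ _ _ _)]
        ring
      rw [e1]
      have step1 : |∫ t in a..(s : ℝ),
            (K' s t * u (T^[n] ψ) t - K' s t * u (T^[n] φ) t)|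
          ≤ ∫ t in a..(s : ℝ),
            |K' s t * u (T^[n] ψ) t - K' s t * u (T^[n] φ) t| :=
        intervalIntegral.abs_integral_le_integral_abs has
      have step2 : ∫ t in a..(s : ℝ),
            |K' s t * u (T^[n] ψ) t - K' s t * u (T^[n] φ) t|
          ≤ ∫ t in a..(s : ℝ), M * (M ^ n * (t - a) ^ n / n.factorial * D) := by
        refine intervalIntegral.integral_mono_on has ?_ ?_ ?_
        · exact (((hFc (T^[n] ψ)).comp (Continuous.prodMk_right (s : ℝ))).sub
            ((hFc (T^[n] φ)).comp (Continuous.prodMk_right (s : ℝ)))).abs.intervalIntegrable _ _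
        · have hcont : Continuous fun t : ℝ => M * (M ^ n * (t - a) ^ n / n.factorial * D) :=
            continuous_const.mul (((continuous_const.mul
              ((continuous_id.sub continuous_const).pow n)).div_const _).mul continuous_const)
          exact hcont.intervalIntegrable _ _
        · intro t ht
          have htab : t ∈ Icc a b := ⟨ht.1, ht.2.trans hs.2⟩
          have hproj : ((projIcc a b hab' t : Icc a b) : ℝ) = t := by
            simpa using hg_id t htab
          have hihs := ih ψ φ (projIcc a b hab' t)
          rw [hproj] at hihs
          have : |K' s t * u (T^[n] ψ) t - K' s t * u (T^[n] φ) t|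
              = |K' s t| * |T^[n] ψ (projIcc a b hab' t) - T^[n] φ (projIcc a b hab' t)| := by
            rw [← abs_mul]; ring_nf
            rfl
          rw [this]
          have hdist : dist ψ φ = D := dist_comm ψ φ
          rw [hdist] at hihs
          refine mul_le_mul (hMK s t) hihs (abs_nonneg _) hM0
      have step3 : ∫ t in a..(s : ℝ), M * (M ^ n * (t - a) ^ n / n.factorial * D)
          = M ^ (n + 1) * ((s : ℝ) - a) ^ (n + 1) / (n + 1).factorial * D := by
        have e2 : (fun t : ℝ => M * (M ^ n * (t - a) ^ n / n.factorial * D))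
            = fun t : ℝ => (M * (M ^ n / n.factorial * D)) * (t - a) ^ n := by
          funext t; ring
        rw [e2, intervalIntegral.integral_const_mul]
        have e3 : (∫ t in a..(s : ℝ), (t - a) ^ n)
            = ((s : ℝ) - a) ^ (n + 1) / (n + 1) := by
          rw [intervalIntegral.integral_comp_sub_right (fun x => x ^ n) a]
          rw [integral_pow]
          simp
        rw [e3]
        have hfac : ((n + 1).factorial : ℝ) = (n + 1) * n.factorial := by
          push_cast [Nat.factorial_succ]; ring
        have hn0 : (n.factorial : ℝ) ≠ 0 := Nat.cast_ne_zero.mpr n.factorial_ne_zero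
        have hn1 : ((n : ℝ) + 1) ≠ 0 := by positivity
        rw [hfac]
        field_simp
        ring
      calc |∫ t in a..(s : ℝ),
            (K' s t * u (T^[n] ψ) t - K' s t * u (T^[n] φ) t)|
          ≤ ∫ t in a..(s : ℝ),
            |K' s t * u (T^[n] ψ) t - K' s t * u (T^[n] φ) t| := step1
        _ ≤ ∫ t in a..(s : ℝ), M * (M ^ n * (t - a) ^ n / n.factorial * D) := step2
        _ = M ^ (n + 1) * ((s : ℝ) - a) ^ (n + 1) / (n + 1).factorial * D := step3
  -- uniform distance estimate for the iterates
  have distb : ∀ n : ℕ, ∀ φ ψ : C(Icc a b, ℝ),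
      dist (T^[n] φ) (T^[n] ψ) ≤ (M * (b - a)) ^ n / n.factorial * dist φ ψ := by
    intro n φ ψ
    have hC0 : 0 ≤ (M * (b - a)) ^ n / n.factorial * dist φ ψ :=
      mul_nonneg (div_nonneg (pow_nonneg (mul_nonneg hM0 (by linarith)) n)
        (Nat.cast_nonneg _)) dist_nonneg
    refine ContinuousMap.dist_le hC0 |>.mpr ?_
    intro s
    have h1 := key n φ ψ s
    have h2 : M ^ n * ((s : ℝ) - a) ^ n / n.factorial * dist φ ψ
        ≤ (M * (b - a)) ^ n / n.factorial * dist φ ψ := by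
      rw [mul_pow]
      have h1 : (0:ℝ) ≤ (s : ℝ) - a := by linarith [s.2.1]
      gcongr
      linarith [s.2.2]
    rw [Real.dist_eq]
    exact h1.trans h2
  -- choose `n` so that the `n`-th iterate is a contraction
  obtain ⟨n, hn⟩ : ∃ n : ℕ, (M * (b - a)) ^ n / n.factorial < 1 := by
    have := FloorSemiring.tendsto_pow_div_factorial_atTop (K := ℝ) (M * (b - a))
    have := this.eventually (gt_mem_nhds one_pos)
    exact this.exists
  have hn0 : 0 ≤ (M * (b - a)) ^ n / n.factorial :=
    div_nonneg (pow_nonneg (mul_nonneg hM0 (by linarith)) n) (Nat.cast_nonneg _)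
  set k : NNReal := ⟨(M * (b - a)) ^ n / n.factorial, hn0⟩ with hk
  have hcontr : ContractingWith k (T^[n]) := by
    constructor
    · exact_mod_cast hn
    · refine LipschitzWith.of_dist_le_mul ?_
      intro φ ψ
      exact distb n φ ψ
  -- the fixed point
  have : Nonempty C(Icc a b, ℝ) := ⟨0⟩
  set x : C(Icc a b, ℝ) := hcontr.fixedPoint (T^[n]) with hx
  have hfix : T x = x := hcontr.isFixedPt_fixedPoint_iterate
  -- conclude
  refine ⟨u x, (huc x).continuousOn, ?_⟩
  intro s hs
  have hxs : u x s = f' s - ∫ t in a..s, K' s t * u x t := by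
    have := congrArg (fun ψ : C(Icc a b, ℝ) => ψ (projIcc a b hab' s)) hfix
    rw [hT_apply] at this
    have hproj : ((projIcc a b hab' s : Icc a b) : ℝ) = s := by simpa using hg_id s hs
    rw [hproj] at this
    exact this.symm
  have hfs : f' s = f s := by rw [hf'def]; simp [hg_id s hs]
  have hint_eq : (∫ t in a..s, K' s t * u x t) = ∫ t in a..s, K s t * u x t := by
    refine intervalIntegral.integral_congr ?_
    intro t ht
    rw [uIcc_of_le hs.1] at ht
    have htab : t ∈ Icc a b := ⟨ht.1, ht.2.trans hs.2⟩
    simp only [hK'def]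
    rw [hg_id s hs, hg_id t htab]
  rw [hxs, hfs, hint_eq]
  ring
end

section
/- Let $0 < \alpha < 1$, let $G(s,t)$ be $C^1$ on $[a,b]\times[a,b]$ with $G(s,s) \neq 0$ for all $s$, and let $\varphi : [a,b] \to \mathbb{R}$ be continuous. If the generalized Abel integral equation $\int_a^s \frac{G(s,t)}{(s-t)^{\alpha}}\,\varphi(t)\,dt = 0$ holds for all $s \in [a,b]$, then $\varphi \equiv 0$ on $[a,b]$. -/
open MeasureTheory Set intervalIntegral Topology Filter

namespace AbelProof

variable {α : ℝ}

noncomputable def w (α u : ℝ) : ℝ := (1 - u) ^ (α - 1) * u ^ (-α)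

lemma w_nonneg (hα1 : α < 1) {u : ℝ} (hu : u ∈ Icc (0:ℝ) 1) : 0 ≤ w α u := by
  have h1 : (0:ℝ) ≤ 1 - u := by linarith [hu.2]
  exact mul_nonneg (Real.rpow_nonneg h1 _) (Real.rpow_nonneg hu.1 _)

lemma w_integrable (hα : 0 < α) (hα1 : α < 1) :
    IntervalIntegrable (w α) volume 0 1 := by
  have h1 : IntervalIntegrable (fun u : ℝ => u ^ (-α)) volume 0 (1/2) :=
    intervalIntegral.intervalIntegrable_rpow' (by linarith)
  have h2 : IntervalIntegrable (fun u : ℝ => (1 - u) ^ (α - 1)) volume (1/2) 1 := by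
    have h3 : IntervalIntegrable (fun u : ℝ => u ^ (α - 1)) volume 0 (1/2) :=
      intervalIntegral.intervalIntegrable_rpow' (by linarith)
    have := (h3.comp_sub_left 1).symm
    norm_num at this
    exact this
  apply IntervalIntegrable.trans (b := 1/2)
  · have hc : ContinuousOn (fun u : ℝ => (1 - u) ^ (α - 1)) (uIcc 0 (1/2)) := by
      apply ContinuousOn.rpow_const (by fun_prop)
      intro x hx
      rw [uIcc_of_le (by norm_num)] at hx
      left; intro h; rw [sub_eq_zero] at h; rw [← h] at hx; norm_num [Icc] at hx
    exact h1.continuousOn_mul hc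
  · have hc : ContinuousOn (fun u : ℝ => u ^ (-α)) (uIcc (1/2) 1) := by
      apply ContinuousOn.rpow_const (by fun_prop)
      intro x hx
      rw [uIcc_of_le (by norm_num)] at hx
      left; intro h; rw [h] at hx; norm_num [Icc] at hx
    exact h2.mul_continuousOn hc

lemma measurable_rpow_const (c : ℝ) : Measurable fun x : ℝ => x ^ c := by
  have hrw : (fun x : ℝ => x ^ c) = fun x =>
      if x = 0 then (if c = 0 then 1 else 0)
      else Real.exp (Real.log x * c) * (if x < 0 then Real.cos (c * Real.pi) else 1) := by
    funext x
    rcases lt_trichotomy x 0 with hx | hx | hx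
    · rw [if_neg (ne_of_lt hx), if_pos hx, Real.rpow_def_of_neg hx]
    · rw [if_pos hx, hx]
      by_cases hc : c = 0
      · rw [if_pos hc, hc, Real.rpow_zero]
      · rw [if_neg hc, Real.zero_rpow hc]
    · rw [if_neg (ne_of_gt hx), if_neg (not_lt.2 hx.le), Real.rpow_def_of_pos hx, mul_one]
  rw [hrw]
  apply Measurable.ite (measurableSet_eq)
  · exact measurable_const
  · apply Measurable.mul
    · exact (Real.measurable_log.mul measurable_const).exp
    · exact Measurable.ite (measurableSet_lt measurable_id measurable_const)
        measurable_const measurable_const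

lemma integral_congr_Ioo {f g : ℝ → ℝ} {a b : ℝ} (hab : a ≤ b)
    (h : ∀ x ∈ Ioo a b, f x = g x) :
    ∫ x in a..b, f x = ∫ x in a..b, g x := by
  rw [intervalIntegral.integral_of_le hab, intervalIntegral.integral_of_le hab,
    MeasureTheory.integral_Ioc_eq_integral_Ioo, MeasureTheory.integral_Ioc_eq_integral_Ioo]
  exact setIntegral_congr_fun measurableSet_Ioo h

lemma ker_integrable (hα : 0 < α) (hα1 : α < 1) {t σ : ℝ} (h : t < σ) {g : ℝ → ℝ}
    (hg : ContinuousOn g (Icc t σ)) :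
    IntervalIntegrable (fun s => (σ - s) ^ (α - 1) * (s - t) ^ (-α) * g s) volume t σ := by
  set m := (t + σ) / 2 with hm
  have htm : t < m := by simp only [hm]; linarith
  have hmσ : m < σ := by simp only [hm]; linarith
  apply IntervalIntegrable.trans (b := m)
  · -- on [t, m]
    have base : IntervalIntegrable (fun s : ℝ => (s - t) ^ (-α)) volume t m := by
      have h0 : IntervalIntegrable (fun x : ℝ => x ^ (-α)) volume 0 (m - t) :=
        intervalIntegral.intervalIntegrable_rpow' (by linarith)
      have := h0.comp_sub_right t
      simpa using this
    have cont : ContinuousOn (fun s : ℝ => (σ - s) ^ (α - 1) * g s) (uIcc t m) := by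
      rw [uIcc_of_le htm.le]
      apply ContinuousOn.mul
      · apply ContinuousOn.rpow_const (by fun_prop)
        intro x hx
        left
        intro hzero
        rw [sub_eq_zero] at hzero
        have := hx.2
        rw [← hzero] at this
        linarith
      · exact hg.mono (Icc_subset_Icc le_rfl hmσ.le)
    have := base.continuousOn_mul cont
    have heqf : (fun s => (σ - s) ^ (α - 1) * (s - t) ^ (-α) * g s)
        = fun s => (σ - s) ^ (α - 1) * g s * (s - t) ^ (-α) := by
      funext s; ring
    rw [heqf]
    exact this
  · -- on [m, σ]
    have base : IntervalIntegrable (fun s : ℝ => (σ - s) ^ (α - 1)) volume m σ := by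
      have h0 : IntervalIntegrable (fun x : ℝ => x ^ (α - 1)) volume 0 (σ - m) :=
        intervalIntegral.intervalIntegrable_rpow' (by linarith)
      have := (h0.comp_sub_left σ).symm
      norm_num at this
      exact this
    have cont : ContinuousOn (fun s : ℝ => (s - t) ^ (-α) * g s) (uIcc m σ) := by
      rw [uIcc_of_le hmσ.le]
      apply ContinuousOn.mul
      · apply ContinuousOn.rpow_const (by fun_prop)
        intro x hx
        left
        intro hzero
        rw [sub_eq_zero] at hzero
        have := hx.1
        rw [hzero] at this
        linarith
      · exact hg.mono (Icc_subset_Icc htm.le le_rfl)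
    have := base.mul_continuousOn cont
    have heqf : (fun s => (σ - s) ^ (α - 1) * (s - t) ^ (-α) * g s)
        = fun s => (σ - s) ^ (α - 1) * ((s - t) ^ (-α) * g s) := by
      funext s; ring
    rw [heqf]
    exact this

lemma subst (hα : 0 < α) (hα1 : α < 1) {t σ : ℝ} (h : t < σ) (g : ℝ → ℝ) :
    (∫ s in t..σ, (σ - s) ^ (α - 1) * (s - t) ^ (-α) * g s)
      = ∫ u in (0:ℝ)..1, w α u * g (t + (σ - t) * u) := by
  have hst : (0:ℝ) < σ - t := by linarith
  have key := intervalIntegral.integral_comp_add_mul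
    (fun s => (σ - s) ^ (α - 1) * (s - t) ^ (-α) * g s) (ne_of_gt hst) t (a := 0) (b := 1)
  have e0 : t + (σ - t) * 0 = t := by ring
  have e4 : t + (σ - t) * 1 = σ := by ring
  rw [e0, e4] at key
  have key2 : (∫ s in t..σ, (σ - s) ^ (α - 1) * (s - t) ^ (-α) * g s)
      = (σ - t) • ∫ u in (0:ℝ)..1,
          (σ - (t + (σ - t) * u)) ^ (α - 1) * (t + (σ - t) * u - t) ^ (-α) * g (t + (σ - t) * u) := by
    rw [key, smul_smul, mul_inv_cancel₀ (ne_of_gt hst), one_smul]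
  rw [key2, ← intervalIntegral.integral_smul]
  apply integral_congr_Ioo zero_le_one
  intro u hu
  have hu0 : (0:ℝ) ≤ u := hu.1.le
  have hu1 : (0:ℝ) ≤ 1 - u := by linarith [hu.2]
  have e1 : σ - (t + (σ - t) * u) = (σ - t) * (1 - u) := by ring
  have e2 : t + (σ - t) * u - t = (σ - t) * u := by ring
  rw [e1, e2, Real.mul_rpow hst.le hu1, Real.mul_rpow hst.le hu0]
  have e3 : (σ - t) * ((σ - t) ^ (α - 1) * (σ - t) ^ (-α)) = 1 := by
    rw [← Real.rpow_add hst]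
    have : α - 1 + -α = -1 := by ring
    rw [this, Real.rpow_neg_one]
    exact mul_inv_cancel₀ (ne_of_gt hst)
  calc (σ - t) • ((σ - t) ^ (α - 1) * (1 - u) ^ (α - 1) * ((σ - t) ^ (-α) * u ^ (-α))
          * g (t + (σ - t) * u))
      = ((σ - t) * ((σ - t) ^ (α - 1) * (σ - t) ^ (-α)))
          * ((1 - u) ^ (α - 1) * u ^ (-α) * g (t + (σ - t) * u)) := by
        rw [smul_eq_mul]; ring
    _ = w α u * g (t + (σ - t) * u) := by rw [e3, w]; ring


noncomputable def H (α : ℝ) (G : ℝ → ℝ → ℝ) (σ t : ℝ) : ℝ :=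
  ∫ u in (0:ℝ)..1, w α u * G (t + (σ - t) * u) t

lemma fubini (hα : 0 < α) (hα1 : α < 1) {a b : ℝ}
    {G : ℝ → ℝ → ℝ} (hGc : Continuous fun p : ℝ × ℝ => G p.1 p.2)
    {φ : ℝ → ℝ} (hφ : Continuous φ)
    (heq : ∀ s ∈ Icc a b, ∫ t in a..s, G s t / (s - t) ^ α * φ t = 0)
    {σ : ℝ} (hσa : a < σ) (hσb : σ ≤ b) :
    IntervalIntegrable (fun t => H α G σ t * φ t) volume a σ ∧
      (∫ t in a..σ, H α G σ t * φ t) = 0 := by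
  have hGc2 : Continuous fun p : ℝ × ℝ => G p.2 p.1 := hGc.comp continuous_swap
  obtain ⟨MG, hMG⟩ := (isCompact_Icc.prod isCompact_Icc :
      IsCompact (Icc a σ ×ˢ Icc a σ)).exists_bound_of_continuousOn hGc2.continuousOn
  obtain ⟨Mφ, hMφ⟩ := (isCompact_Icc : IsCompact (Icc a σ)).exists_bound_of_continuousOn
      hφ.continuousOn
  set S : Set (ℝ × ℝ) := {p | a < p.1 ∧ p.1 < p.2 ∧ p.2 < σ} with hS
  set f : ℝ × ℝ → ℝ :=
    fun p => (σ - p.2) ^ (α - 1) * (p.2 - p.1) ^ (-α) * (G p.2 p.1 * φ p.1) with hf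
  set F := S.indicator f with hF
  have hSm : MeasurableSet S := by
    have h1 : MeasurableSet {p : ℝ × ℝ | a < p.1} :=
      measurableSet_lt measurable_const measurable_fst
    have h2 : MeasurableSet {p : ℝ × ℝ | p.1 < p.2} :=
      measurableSet_lt measurable_fst measurable_snd
    have h3 : MeasurableSet {p : ℝ × ℝ | p.2 < σ} :=
      measurableSet_lt measurable_snd measurable_const
    rw [hS, setOf_and, setOf_and]
    exact h1.inter (h2.inter h3)
  have hfm : Measurable f := by
    apply Measurable.mul
    · apply Measurable.mul
      · exact (measurable_rpow_const (α-1)).comp (measurable_const.sub measurable_snd)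
      · exact (measurable_rpow_const (-α)).comp (measurable_snd.sub measurable_fst)
    · exact hGc2.measurable.mul (hφ.measurable.comp measurable_fst)
  have hslice1 : ∀ t ∈ Ioo a σ,
      (fun s => F (t, s)) = (Ioo t σ).indicator (fun s => f (t, s)) := by
    intro t ht; funext s
    by_cases hs : s ∈ Ioo t σ
    · rw [indicator_of_mem hs]
      exact indicator_of_mem (show (t, s) ∈ S from ⟨ht.1, hs.1, hs.2⟩) f
    · rw [indicator_of_notMem hs]
      exact indicator_of_notMem (fun hmem => hs ⟨hmem.2.1, hmem.2.2⟩) f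
  have hslice0 : ∀ t, t ∉ Ioo a σ → (fun s => F (t, s)) = 0 := by
    intro t ht; funext s
    exact indicator_of_notMem (fun hmem => ht ⟨hmem.1, lt_trans hmem.2.1 hmem.2.2⟩) f
  have hker : ∀ t ∈ Ioo a σ, IntervalIntegrable (fun s => f (t, s)) volume t σ := by
    intro t ht
    have hc : ContinuousOn (fun s => G s t * φ t) (Icc t σ) :=
      ((hGc.comp (continuous_id.prodMk continuous_const)).mul continuous_const).continuousOn
    exact ker_integrable hα hα1 ht.2 hc
  have hIoo : ∀ t ∈ Ioo a σ, IntegrableOn (fun s => f (t, s)) (Ioo t σ) volume := by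
    intro t ht
    have h2 := intervalIntegrable_iff.1 (hker t ht)
    rw [uIoc_of_le ht.2.le] at h2
    exact h2.mono_set Ioo_subset_Ioc_self
  have hF1 : ∀ t, Integrable (fun s => F (t, s)) volume := by
    intro t
    by_cases ht : t ∈ Ioo a σ
    · rw [hslice1 t ht]
      exact (integrable_indicator_iff measurableSet_Ioo).2 (hIoo t ht)
    · rw [hslice0 t ht]
      exact integrable_zero _ _ _
  have hGbound : ∀ t ∈ Icc a σ, ∀ x ∈ Icc a σ, |G x t * φ t| ≤ MG * Mφ := by
    intro t ht x hx
    rw [abs_mul]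
    have h1 : |G x t| ≤ MG := by
      have := hMG (t, x) ⟨ht, hx⟩
      rwa [Real.norm_eq_abs] at this
    have h2 : |φ t| ≤ Mφ := by have := hMφ t ht; rwa [Real.norm_eq_abs] at this
    exact mul_le_mul h1 h2 (abs_nonneg _) ((abs_nonneg _).trans h1)
  have hMG0 : 0 ≤ MG := (norm_nonneg _).trans (hMG (a, a) ⟨⟨le_rfl, hσa.le⟩, ⟨le_rfl, hσa.le⟩⟩)
  have hMφ0 : 0 ≤ Mφ := (norm_nonneg _).trans (hMφ a ⟨le_rfl, hσa.le⟩)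
  set c₀ : ℝ := ∫ u in (0:ℝ)..1, w α u with hc₀
  have hwi := w_integrable hα hα1
  have hnorm_le : ∀ t ∈ Ioo a σ, (∫ s, ‖F (t, s)‖) ≤ MG * Mφ * c₀ := by
    intro t ht
    have habs : (fun s => ‖(Ioo t σ).indicator (fun s => f (t, s)) s‖)
        = (Ioo t σ).indicator (fun s => ‖f (t, s)‖) := by
      funext s; exact norm_indicator_eq_indicator_norm _ s
    have step1 : (∫ s, ‖F (t, s)‖)
        = ∫ u in (0:ℝ)..1, w α u * |G (t + (σ - t) * u) t * φ t| := by
      have hcf := fun s => congrFun (hslice1 t ht) s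
      simp only [hcf]
      rw [habs, MeasureTheory.integral_indicator measurableSet_Ioo,
        ← MeasureTheory.integral_Ioc_eq_integral_Ioo,
        ← intervalIntegral.integral_of_le ht.2.le]
      have hcongr : (∫ s in t..σ, ‖f (t, s)‖)
          = ∫ s in t..σ, (σ - s) ^ (α - 1) * (s - t) ^ (-α) * |G s t * φ t| := by
        apply integral_congr_Ioo ht.2.le
        intro x hx
        show ‖(σ - x) ^ (α - 1) * (x - t) ^ (-α) * (G x t * φ t)‖ = _
        rw [Real.norm_eq_abs, abs_mul, abs_mul,
          abs_of_nonneg (Real.rpow_nonneg (by linarith [hx.2] : (0:ℝ) ≤ σ - x) _),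
          abs_of_nonneg (Real.rpow_nonneg (by linarith [hx.1] : (0:ℝ) ≤ x - t) _)]
      rw [hcongr]
      exact subst hα hα1 ht.2 (fun s => |G s t * φ t|)
    rw [step1]
    have hint1 : IntervalIntegrable (fun u => w α u * |G (t + (σ - t) * u) t * φ t|)
        volume 0 1 := by
      apply hwi.mul_continuousOn
      exact (((hGc.comp ((continuous_const.add (continuous_const.mul continuous_id)).prodMk
        continuous_const)).mul continuous_const).abs).continuousOn
    have hint2 : IntervalIntegrable (fun u => w α u * (MG * Mφ)) volume 0 1 :=
      hwi.mul_continuousOn continuousOn_const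
    have hmono := intervalIntegral.integral_mono_on (zero_le_one) hint1 hint2 ?_
    · calc (∫ u in (0:ℝ)..1, w α u * |G (t + (σ - t) * u) t * φ t|)
          ≤ ∫ u in (0:ℝ)..1, w α u * (MG * Mφ) := hmono
        _ = MG * Mφ * c₀ := by rw [intervalIntegral.integral_mul_const]; ring
    · intro u hu
      have hw0 : 0 ≤ w α u := w_nonneg hα1 hu
      apply mul_le_mul_of_nonneg_left _ hw0
      apply hGbound t ⟨ht.1.le, ht.2.le⟩
      constructor
      · nlinarith [ht.1, ht.2, hu.1, hu.2]
      · nlinarith [ht.1, ht.2, hu.1, hu.2]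
  have hFm : AEStronglyMeasurable F (volume.prod volume) := by
    rw [← Measure.volume_eq_prod]
    exact (hfm.indicator hSm).aestronglyMeasurable
  have hF2 : Integrable (fun t => ∫ s, ‖F (t, s)‖) volume := by
    apply Integrable.mono' (g := (Ioo a σ).indicator (fun _ => MG * Mφ * c₀))
    · exact (integrable_indicator_iff measurableSet_Ioo).2
        (integrableOn_const measure_Ioo_lt_top.ne)
    · exact hFm.norm.integral_prod_right'
    · filter_upwards with t
      by_cases ht : t ∈ Ioo a σ
      · rw [indicator_of_mem ht, Real.norm_eq_abs,
          abs_of_nonneg (integral_nonneg (fun s => norm_nonneg _))]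
        exact hnorm_le t ht
      · have h0 : ∀ s, F (t, s) = 0 := fun s => congrFun (hslice0 t ht) s
        rw [indicator_of_notMem ht]
        simp [h0]
  have hFint : Integrable F (volume.prod volume) :=
    (integrable_prod_iff hFm).2 ⟨ae_of_all _ hF1, hF2⟩
  have hmarg : ∀ t, (∫ s, F (t, s)) = (Ioo a σ).indicator (fun t => H α G σ t * φ t) t := by
    intro t
    by_cases ht : t ∈ Ioo a σ
    · have hcf := fun s => congrFun (hslice1 t ht) s
      simp only [hcf]
      rw [MeasureTheory.integral_indicator measurableSet_Ioo, indicator_of_mem ht,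
        ← MeasureTheory.integral_Ioc_eq_integral_Ioo,
        ← intervalIntegral.integral_of_le ht.2.le]
      have hs2 := subst hα hα1 ht.2 (fun s => G s t * φ t)
      have : (∫ s in t..σ, f (t, s))
          = ∫ u in (0:ℝ)..1, w α u * (G (t + (σ - t) * u) t * φ t) := hs2
      rw [this]
      have : (∫ u in (0:ℝ)..1, w α u * (G (t + (σ - t) * u) t * φ t))
          = (∫ u in (0:ℝ)..1, w α u * G (t + (σ - t) * u) t) * φ t := by
        rw [← intervalIntegral.integral_mul_const]
        congr 1; funext u; ring
      rw [this]; rfl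
    · have h0 : ∀ s, F (t, s) = 0 := fun s => congrFun (hslice0 t ht) s
      rw [indicator_of_notMem ht]
      simp [h0]
  have hinner : ∀ s, (∫ t, F (t, s)) = 0 := by
    intro s
    by_cases hs : s ∈ Ioo a σ
    · have hsl : (fun t => F (t, s)) = (Ioo a s).indicator (fun t => f (t, s)) := by
        funext t
        by_cases htm : t ∈ Ioo a s
        · rw [indicator_of_mem htm]
          exact indicator_of_mem (show (t, s) ∈ S from ⟨htm.1, htm.2, hs.2⟩) f
        · rw [indicator_of_notMem htm]
          exact indicator_of_notMem (fun hmem => htm ⟨hmem.1, hmem.2.1⟩) f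
      have hcf := fun t => congrFun hsl t
      simp only [hcf]
      rw [MeasureTheory.integral_indicator measurableSet_Ioo,
        ← MeasureTheory.integral_Ioc_eq_integral_Ioo,
        ← intervalIntegral.integral_of_le hs.1.le]
      have hcg : (∫ t in a..s, f (t, s))
          = ∫ t in a..s, (σ - s) ^ (α - 1) * (G s t / (s - t) ^ α * φ t) := by
        apply integral_congr_Ioo hs.1.le
        intro x hx
        show (σ - s) ^ (α - 1) * (s - x) ^ (-α) * (G s x * φ x) = _
        rw [Real.rpow_neg (by linarith [hx.2] : (0:ℝ) ≤ s - x)]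
        ring
      rw [hcg, intervalIntegral.integral_const_mul,
        heq s ⟨hs.1.le, hs.2.le.trans hσb⟩, mul_zero]
    · have h0 : ∀ t, F (t, s) = 0 := by
        intro t
        exact indicator_of_notMem
          (fun hmem => hs ⟨lt_trans hmem.1 hmem.2.1, hmem.2.2⟩) f
      simp [h0]
  have hm1 : Integrable (fun t => ∫ s, F (t, s)) volume := hFint.integral_prod_left
  have hmargfun : (fun t => ∫ s, F (t, s))
      = (Ioo a σ).indicator (fun t => H α G σ t * φ t) := funext hmarg
  constructor
  · rw [hmargfun] at hm1
    have hio := (integrable_indicator_iff measurableSet_Ioo).1 hm1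
    rw [intervalIntegrable_iff, uIoc_of_le hσa.le]
    exact hio.congr_set_ae Ioo_ae_eq_Ioc.symm
  · have swap : (∫ t, ∫ s, F (t, s)) = ∫ s, ∫ t, F (t, s) :=
      integral_integral_swap hFint
    calc (∫ t in a..σ, H α G σ t * φ t)
        = ∫ t, (Ioo a σ).indicator (fun t => H α G σ t * φ t) t := by
          rw [MeasureTheory.integral_indicator measurableSet_Ioo,
            ← MeasureTheory.integral_Ioc_eq_integral_Ioo,
            ← intervalIntegral.integral_of_le hσa.le]
      _ = ∫ t, ∫ s, F (t, s) := by rw [hmargfun]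
      _ = ∫ s, ∫ t, F (t, s) := swap
      _ = 0 := by simp [hinner]


theorem aux (hα : 0 < α) (hα1 : α < 1) {a b : ℝ} (hab : a < b)
    {G : ℝ → ℝ → ℝ} (hGc : Continuous fun p : ℝ × ℝ => G p.1 p.2)
    {L : ℝ} (hL0 : 0 ≤ L)
    (hGl : ∀ p q : ℝ × ℝ, |G p.1 p.2 - G q.1 q.2| ≤ L * max |p.1 - q.1| |p.2 - q.2|)
    {φ : ℝ → ℝ} (hφ : Continuous φ)
    (heq : ∀ s ∈ Icc a b, ∫ t in a..s, G s t / (s - t) ^ α * φ t = 0)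
    {m : ℝ} (hm : 0 < m) (hmG : ∀ s ∈ Icc a b, m ≤ |G s s|) :
    EqOn φ 0 (Icc a b) := by
  obtain ⟨Mφ, hMφ⟩ := (isCompact_Icc : IsCompact (Icc a b)).exists_bound_of_continuousOn
    hφ.continuousOn
  have hMφ' : ∀ t ∈ Icc a b, |φ t| ≤ Mφ := by
    intro t ht; have := hMφ t ht; rwa [Real.norm_eq_abs] at this
  have hMφ0 : 0 ≤ Mφ := (norm_nonneg _).trans (hMφ a ⟨le_rfl, hab.le⟩)
  have hwi := w_integrable hα hα1
  set c₀ : ℝ := ∫ u in (0:ℝ)..1, w α u with hc₀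
  have hc₀pos : 0 < c₀ := by
    apply intervalIntegral.intervalIntegral_pos_of_pos_on hwi _ one_pos
    intro x hx
    exact mul_pos (Real.rpow_pos_of_pos (by linarith [hx.2]) _)
      (Real.rpow_pos_of_pos hx.1 _)
  set c₂ : ℝ := ∫ u in (0:ℝ)..1, w α u * u with hc₂
  have hwui : IntervalIntegrable (fun u => w α u * u) volume 0 1 :=
    hwi.mul_continuousOn continuous_id.continuousOn
  have hc₂0 : 0 ≤ c₂ := by
    apply intervalIntegral.integral_nonneg zero_le_one
    intro u hu
    exact mul_nonneg (w_nonneg hα1 hu) hu.1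
  have hHint : ∀ σ t : ℝ,
      IntervalIntegrable (fun u => w α u * G (t + (σ - t) * u) t) volume 0 1 := by
    intro σ t
    apply hwi.mul_continuousOn
    exact ((hGc.comp ((continuous_const.add (continuous_const.mul continuous_id)).prodMk
      continuous_const)).continuousOn)
  have habs_bound : ∀ (g : ℝ → ℝ) (B : ℝ), IntervalIntegrable g volume 0 1 →
      (∀ u ∈ Icc (0:ℝ) 1, |g u| ≤ w α u * (B * u)) → |∫ u in (0:ℝ)..1, g u| ≤ B * c₂ := by
    intro g B hg hb
    have h1 : |∫ u in (0:ℝ)..1, g u| ≤ ∫ u in (0:ℝ)..1, |g u| := by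
      have := intervalIntegral.norm_integral_le_integral_norm (f := g) (μ := volume)
        (a := (0:ℝ)) (b := 1) zero_le_one
      simpa [Real.norm_eq_abs] using this
    have hbi : IntervalIntegrable (fun u => w α u * (B * u)) volume 0 1 := by
      have h2 := hwui.const_mul B
      have : (fun u => w α u * (B * u)) = fun u => B * (w α u * u) := by funext u; ring
      rw [this]; exact h2
    have h2 : (∫ u in (0:ℝ)..1, |g u|) ≤ ∫ u in (0:ℝ)..1, w α u * (B * u) := by
      apply intervalIntegral.integral_mono_on zero_le_one _ hbi hb
      have := hg.norm
      simpa [Real.norm_eq_abs] using this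
    have h3 : (∫ u in (0:ℝ)..1, w α u * (B * u)) = B * c₂ := by
      have : (fun u => w α u * (B * u)) = fun u => B * (w α u * u) := by funext u; ring
      rw [this, intervalIntegral.integral_const_mul]
    linarith
  have hE1 : ∀ σ' σ t : ℝ, |H α G σ' t - H α G σ t| ≤ L * |σ' - σ| * c₂ := by
    intro σ' σ t
    have hde : H α G σ' t - H α G σ t = ∫ u in (0:ℝ)..1,
        (w α u * G (t + (σ' - t) * u) t - w α u * G (t + (σ - t) * u) t) :=
      (intervalIntegral.integral_sub (hHint σ' t) (hHint σ t)).symm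
    rw [hde]
    apply habs_bound _ _ ((hHint σ' t).sub (hHint σ t))
    intro u hu
    have hlip := hGl (t + (σ' - t) * u, t) (t + (σ - t) * u, t)
    simp only [sub_self, abs_zero] at hlip
    have he : t + (σ' - t) * u - (t + (σ - t) * u) = (σ' - σ) * u := by ring
    rw [he] at hlip
    have hmax : max |(σ' - σ) * u| 0 = |σ' - σ| * u := by
      rw [max_eq_left (abs_nonneg _), abs_mul, abs_of_nonneg hu.1]
    rw [hmax] at hlip
    have hw0 : 0 ≤ w α u := w_nonneg hα1 hu
    calc |w α u * G (t + (σ' - t) * u) t - w α u * G (t + (σ - t) * u) t|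
        = w α u * |G (t + (σ' - t) * u) t - G (t + (σ - t) * u) t| := by
          rw [← mul_sub, abs_mul, abs_of_nonneg hw0]
      _ ≤ w α u * (L * (|σ' - σ| * u)) := mul_le_mul_of_nonneg_left hlip hw0
      _ = w α u * (L * |σ' - σ| * u) := by ring
  have hE2 : ∀ σ t : ℝ, |H α G σ t - c₀ * G t t| ≤ L * |σ - t| * c₂ := by
    intro σ t
    have hcst : c₀ * G t t = ∫ u in (0:ℝ)..1, w α u * G t t := by
      rw [intervalIntegral.integral_mul_const]
    have hcsti : IntervalIntegrable (fun u => w α u * G t t) volume 0 1 :=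
      hwi.mul_continuousOn continuousOn_const
    have hde : H α G σ t - c₀ * G t t = ∫ u in (0:ℝ)..1,
        (w α u * G (t + (σ - t) * u) t - w α u * G t t) := by
      rw [hcst]
      exact (intervalIntegral.integral_sub (hHint σ t) hcsti).symm
    rw [hde]
    apply habs_bound _ _ ((hHint σ t).sub hcsti)
    intro u hu
    have hlip := hGl (t + (σ - t) * u, t) (t, t)
    simp only [sub_self, abs_zero] at hlip
    have he : t + (σ - t) * u - t = (σ - t) * u := by ring
    rw [he] at hlip
    have hmax : max |(σ - t) * u| 0 = |σ - t| * u := by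
      rw [max_eq_left (abs_nonneg _), abs_mul, abs_of_nonneg hu.1]
    rw [hmax] at hlip
    have hw0 : 0 ≤ w α u := w_nonneg hα1 hu
    calc |w α u * G (t + (σ - t) * u) t - w α u * G t t|
        = w α u * |G (t + (σ - t) * u) t - G t t| := by
          rw [← mul_sub, abs_mul, abs_of_nonneg hw0]
      _ ≤ w α u * (L * (|σ - t| * u)) := mul_le_mul_of_nonneg_left hlip hw0
      _ = w α u * (L * |σ - t| * u) := by ring
  -- the primitive functions
  set g0 : ℝ → ℝ := fun t => G t t * φ t with hg0
  have hg0c : Continuous g0 :=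
    (hGc.comp (continuous_id.prodMk continuous_id)).mul hφ
  set Φ : ℝ → ℝ := fun x => ∫ t in a..x, g0 t with hΦ
  set ψ : ℝ → ℝ := fun x => ∫ t in a..x, |φ t| with hψ
  have hφa : Continuous fun t => |φ t| := hφ.abs
  have hψcont : Continuous ψ :=
    intervalIntegral.continuous_primitive (fun c d => hφa.intervalIntegrable c d) a
  have hψ0 : ∀ x, a ≤ x → 0 ≤ ψ x :=
    fun x hx => intervalIntegral.integral_nonneg hx (fun t _ => abs_nonneg _)
  have hψmono : ∀ x y, a ≤ x → x ≤ y → ψ x ≤ ψ y := by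
    intro x y hax hxy
    have hadd := intervalIntegral.integral_add_adjacent_intervals
      (hφa.intervalIntegrable (μ := volume) a x) (hφa.intervalIntegrable (μ := volume) x y)
    have h2 : 0 ≤ ∫ t in x..y, |φ t| :=
      intervalIntegral.integral_nonneg hxy (fun t _ => abs_nonneg _)
    have : ψ y = ψ x + ∫ t in x..y, |φ t| := by rw [hψ]; simp only; linarith [hadd]
    linarith
  -- integrability of the remainder integrand
  have hEφint : ∀ σ, a < σ → σ ≤ b →
      IntervalIntegrable (fun t => (H α G σ t - c₀ * G t t) * φ t) volume a σ := by
    intro σ h1 h2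
    have hfi := (fubini hα hα1 hGc hφ heq h1 h2).1
    have h3 : IntervalIntegrable (fun t => c₀ * G t t * φ t) volume a σ := by
      apply Continuous.intervalIntegrable
      exact (continuous_const.mul (hGc.comp (continuous_id.prodMk continuous_id))).mul hφ
    have h4 := hfi.sub h3
    have he : (fun t => (H α G σ t - c₀ * G t t) * φ t)
        = fun t => H α G σ t * φ t - c₀ * G t t * φ t := by funext t; ring
    rw [he]
    exact h4
  have hEφint' : ∀ σ, a ≤ σ → σ ≤ b →
      IntervalIntegrable (fun t => (H α G σ t - c₀ * G t t) * φ t) volume a σ := by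
    intro σ h1 h2
    rcases eq_or_lt_of_le h1 with hEq | hlt
    · rw [← hEq]
    · exact hEφint σ hlt h2
  -- the fundamental identity
  have hiden : ∀ σ ∈ Icc a b,
      c₀ * Φ σ = - ∫ t in a..σ, (H α G σ t - c₀ * G t t) * φ t := by
    intro σ hσ
    rcases eq_or_lt_of_le hσ.1 with hEq | hlt
    · rw [← hEq]
      simp [hΦ]
    · have hf2 := (fubini hα hα1 hGc hφ heq hlt hσ.2).2
      have h3 : IntervalIntegrable (fun t => c₀ * g0 t) volume a σ :=
        (continuous_const.mul hg0c).intervalIntegrable a σ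
      have hsplit : (∫ t in a..σ, H α G σ t * φ t)
          = (∫ t in a..σ, (H α G σ t - c₀ * G t t) * φ t) + ∫ t in a..σ, c₀ * g0 t := by
        rw [← intervalIntegral.integral_add (hEφint σ hlt hσ.2) h3]
        apply intervalIntegral.integral_congr
        intro t _
        show H α G σ t * φ t = (H α G σ t - c₀ * G t t) * φ t + c₀ * (G t t * φ t)
        ring
      have h5 : (∫ t in a..σ, c₀ * g0 t) = c₀ * Φ σ := by
        rw [intervalIntegral.integral_const_mul]
      rw [hf2, h5] at hsplit
      linarith
  -- the key increment estimate
  have hKEY : ∀ σ σ', σ ∈ Icc a b → σ' ∈ Icc a b → σ ≤ σ' →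
      c₀ * |Φ σ' - Φ σ| ≤ L * c₂ * ((σ' - σ) * (ψ σ' + (σ' - σ) * Mφ)) := by
    intro σ σ' hσ hσ' hle
    have hint1 : IntervalIntegrable (fun t => (H α G σ' t - c₀ * G t t) * φ t) volume a σ := by
      apply (hEφint' σ' hσ'.1 hσ'.2).mono_set
      rw [uIcc_of_le hσ.1, uIcc_of_le hσ'.1]
      exact Icc_subset_Icc le_rfl hle
    have hint2 : IntervalIntegrable (fun t => (H α G σ' t - c₀ * G t t) * φ t) volume σ σ' := by
      apply (hEφint' σ' hσ'.1 hσ'.2).mono_set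
      rw [uIcc_of_le hle, uIcc_of_le hσ'.1]
      exact Icc_subset_Icc hσ.1 le_rfl
    have hintσ := hEφint' σ hσ.1 hσ.2
    have hadd := intervalIntegral.integral_add_adjacent_intervals hint1 hint2
    have hidσ := hiden σ hσ
    have hidσ' := hiden σ' hσ'
    -- first piece
    have hfirst : |(∫ t in a..σ, (H α G σ' t - c₀ * G t t) * φ t)
        - ∫ t in a..σ, (H α G σ t - c₀ * G t t) * φ t|
        ≤ L * c₂ * ((σ' - σ) * ψ σ) := by
      rw [← intervalIntegral.integral_sub hint1 hintσ]
      have hrw : (fun t => (H α G σ' t - c₀ * G t t) * φ t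
          - (H α G σ t - c₀ * G t t) * φ t) = fun t => (H α G σ' t - H α G σ t) * φ t := by
        funext t; ring
      have h6 : |∫ t in a..σ, ((H α G σ' t - c₀ * G t t) * φ t
          - (H α G σ t - c₀ * G t t) * φ t)|
          ≤ ∫ t in a..σ, |(H α G σ' t - c₀ * G t t) * φ t
          - (H α G σ t - c₀ * G t t) * φ t| := by
        have := intervalIntegral.norm_integral_le_integral_norm (μ := volume)
          (f := fun t => (H α G σ' t - c₀ * G t t) * φ t
            - (H α G σ t - c₀ * G t t) * φ t) (a := a) (b := σ) hσ.1
        simpa [Real.norm_eq_abs] using this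
      have h7 : (∫ t in a..σ, |(H α G σ' t - c₀ * G t t) * φ t
          - (H α G σ t - c₀ * G t t) * φ t|)
          ≤ ∫ t in a..σ, L * c₂ * (σ' - σ) * |φ t| := by
        apply intervalIntegral.integral_mono_on hσ.1
        · have := (hint1.sub hintσ).norm
          simpa [Real.norm_eq_abs] using this
        · exact (continuous_const.mul hφa).intervalIntegrable a σ
        · intro t _
          have hre : (H α G σ' t - c₀ * G t t) * φ t - (H α G σ t - c₀ * G t t) * φ t
              = (H α G σ' t - H α G σ t) * φ t := by ring
          rw [hre, abs_mul]
          have h8 := hE1 σ' σ t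
          have h9 : |σ' - σ| = σ' - σ := abs_of_nonneg (by linarith)
          rw [h9] at h8
          have h10 : |H α G σ' t - H α G σ t| * |φ t| ≤ (L * (σ' - σ) * c₂) * |φ t| :=
            mul_le_mul_of_nonneg_right h8 (abs_nonneg _)
          calc |H α G σ' t - H α G σ t| * |φ t| ≤ L * (σ' - σ) * c₂ * |φ t| := h10
            _ = L * c₂ * (σ' - σ) * |φ t| := by ring
      have h11 : (∫ t in a..σ, L * c₂ * (σ' - σ) * |φ t|) = L * c₂ * (σ' - σ) * ψ σ :=
        intervalIntegral.integral_const_mul _ _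
      have h12 : L * c₂ * (σ' - σ) * ψ σ ≤ L * c₂ * (σ' - σ) * ψ σ' := by
        apply mul_le_mul_of_nonneg_left (hψmono σ σ' hσ.1 hle)
        have : 0 ≤ σ' - σ := by linarith
        positivity
      calc |∫ t in a..σ, ((H α G σ' t - c₀ * G t t) * φ t
            - (H α G σ t - c₀ * G t t) * φ t)| ≤ _ := h6
        _ ≤ ∫ t in a..σ, L * c₂ * (σ' - σ) * |φ t| := h7
        _ = L * c₂ * (σ' - σ) * ψ σ := h11
        _ ≤ L * c₂ * ((σ' - σ) * ψ σ) := by ring_nf; exact le_rfl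
    have hled : (0:ℝ) ≤ σ' - σ := by linarith
    have hsecond : |∫ t in σ..σ', (H α G σ' t - c₀ * G t t) * φ t|
        ≤ L * c₂ * ((σ' - σ) * ((σ' - σ) * Mφ)) := by
      have hb : ∀ t ∈ Set.uIoc σ σ', ‖(H α G σ' t - c₀ * G t t) * φ t‖
          ≤ L * c₂ * (σ' - σ) * Mφ := by
        intro t ht
        rw [uIoc_of_le hle] at ht
        rw [Real.norm_eq_abs, abs_mul]
        have h8 := hE2 σ' t
        have h9 : |σ' - t| = σ' - t := abs_of_nonneg (by linarith [ht.2])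
        rw [h9] at h8
        have h8' : |H α G σ' t - c₀ * G t t| ≤ L * (σ' - σ) * c₂ := by
          have h8'' : L * (σ' - t) * c₂ ≤ L * (σ' - σ) * c₂ := by
            have h13 : σ' - t ≤ σ' - σ := by linarith [ht.1]
            exact mul_le_mul_of_nonneg_right (mul_le_mul_of_nonneg_left h13 hL0) hc₂0
          linarith
        have hφb : |φ t| ≤ Mφ := hMφ' t ⟨hσ.1.trans ht.1.le, ht.2.trans hσ'.2⟩
        calc |H α G σ' t - c₀ * G t t| * |φ t| ≤ (L * (σ' - σ) * c₂) * Mφ := by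
              apply mul_le_mul h8' hφb (abs_nonneg _)
              positivity
          _ = L * c₂ * (σ' - σ) * Mφ := by ring
      have h14 := intervalIntegral.norm_integral_le_of_norm_le_const hb
      rw [Real.norm_eq_abs] at h14
      have habsd : |σ' - σ| = σ' - σ := abs_of_nonneg hled
      rw [habsd] at h14
      calc |∫ t in σ..σ', (H α G σ' t - c₀ * G t t) * φ t|
          ≤ L * c₂ * (σ' - σ) * Mφ * (σ' - σ) := h14
        _ = L * c₂ * ((σ' - σ) * ((σ' - σ) * Mφ)) := by ring
    have hcomb : c₀ * Φ σ' - c₀ * Φ σ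
        = -(((∫ t in a..σ, (H α G σ' t - c₀ * G t t) * φ t)
            - ∫ t in a..σ, (H α G σ t - c₀ * G t t) * φ t)
          + ∫ t in σ..σ', (H α G σ' t - c₀ * G t t) * φ t) := by
      rw [hidσ, hidσ', ← hadd]
      ring
    have heqa : c₀ * |Φ σ' - Φ σ| = |c₀ * Φ σ' - c₀ * Φ σ| := by
      rw [← mul_sub, abs_mul, abs_of_nonneg hc₀pos.le]
    rw [heqa, hcomb, abs_neg]
    calc |((∫ t in a..σ, (H α G σ' t - c₀ * G t t) * φ t)
            - ∫ t in a..σ, (H α G σ t - c₀ * G t t) * φ t)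
          + ∫ t in σ..σ', (H α G σ' t - c₀ * G t t) * φ t|
        ≤ |(∫ t in a..σ, (H α G σ' t - c₀ * G t t) * φ t)
            - ∫ t in a..σ, (H α G σ t - c₀ * G t t) * φ t|
          + |∫ t in σ..σ', (H α G σ' t - c₀ * G t t) * φ t| := abs_add_le _ _
      _ ≤ L * c₂ * ((σ' - σ) * ψ σ) + L * c₂ * ((σ' - σ) * ((σ' - σ) * Mφ)) :=
          add_le_add hfirst hsecond
      _ ≤ L * c₂ * ((σ' - σ) * ψ σ') + L * c₂ * ((σ' - σ) * ((σ' - σ) * Mφ)) := by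
          have h15 : ψ σ ≤ ψ σ' := hψmono σ σ' hσ.1 hle
          have h16 : 0 ≤ L * c₂ := mul_nonneg hL0 hc₂0
          have h17 : (σ' - σ) * ψ σ ≤ (σ' - σ) * ψ σ' :=
            mul_le_mul_of_nonneg_left h15 hled
          have h18 : L * c₂ * ((σ' - σ) * ψ σ) ≤ L * c₂ * ((σ' - σ) * ψ σ') :=
            mul_le_mul_of_nonneg_left h17 h16
          linarith
      _ = L * c₂ * ((σ' - σ) * (ψ σ' + (σ' - σ) * Mφ)) := by ring
  -- pointwise bound on the derivative
  set C : ℝ := L * c₂ / c₀ with hC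
  have hC0 : 0 ≤ C := div_nonneg (mul_nonneg hL0 hc₂0) hc₀pos.le
  have hKEY' : ∀ σ σ', σ ∈ Icc a b → σ' ∈ Icc a b → σ ≤ σ' →
      |Φ σ' - Φ σ| ≤ C * ((σ' - σ) * (ψ σ' + (σ' - σ) * Mφ)) := by
    intro σ σ' hσ hσ' hle
    have h1 := hKEY σ σ' hσ hσ' hle
    rw [hC, div_mul_eq_mul_div, le_div_iff₀ hc₀pos]
    calc |Φ σ' - Φ σ| * c₀ = c₀ * |Φ σ' - Φ σ| := by ring
      _ ≤ L * c₂ * ((σ' - σ) * (ψ σ' + (σ' - σ) * Mφ)) := h1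
  have hder : ∀ σ ∈ Icc a b, |g0 σ| ≤ C * ψ σ := by
    intro σ hσ
    have hΦder : HasDerivAt Φ (g0 σ) σ :=
      intervalIntegral.integral_hasDerivAt_right
        (hg0c.intervalIntegrable (μ := volume) a σ)
        hg0c.stronglyMeasurable.stronglyMeasurableAtFilter hg0c.continuousAt
    have hW : HasDerivWithinAt Φ (g0 σ) (Icc a b) σ := hΦder.hasDerivWithinAt
    rw [hasDerivWithinAt_iff_tendsto_slope] at hW
    have hne : (𝓝[Icc a b \ {σ}] σ).NeBot := by
      rcases lt_or_ge σ b with h1 | h1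
      · have hsub : Ioo σ b ⊆ Icc a b \ {σ} := by
          intro x hx
          exact ⟨⟨hσ.1.trans hx.1.le, hx.2.le⟩, fun hh => absurd (mem_singleton_iff.1 hh)
            (ne_of_gt hx.1)⟩
        have hcl : σ ∈ closure (Ioo σ b) := by
          rw [closure_Ioo (ne_of_lt h1)]; exact ⟨le_rfl, h1.le⟩
        haveI := mem_closure_iff_nhdsWithin_neBot.1 hcl
        exact Filter.neBot_of_le (nhdsWithin_mono σ hsub)
      · have hσb : σ = b := le_antisymm hσ.2 h1
        have haσ : a < σ := hσb ▸ hab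
        have hsub : Ioo a σ ⊆ Icc a b \ {σ} := by
          intro x hx
          refine ⟨⟨hx.1.le, ?_⟩, fun hh => absurd (mem_singleton_iff.1 hh) (ne_of_lt hx.2)⟩
          rw [← hσb]; exact hx.2.le
        have hcl : σ ∈ closure (Ioo a σ) := by
          rw [closure_Ioo (ne_of_lt haσ)]; exact ⟨haσ.le, le_rfl⟩
        haveI := mem_closure_iff_nhdsWithin_neBot.1 hcl
        exact Filter.neBot_of_le (nhdsWithin_mono σ hsub)
    have hslope : ∀ x ∈ Icc a b \ {σ}, |slope Φ σ x|
        ≤ C * (ψ (max σ x) + |x - σ| * Mφ) := by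
      intro x hx
      have hxne : x ≠ σ := fun hh => hx.2 (mem_singleton_iff.2 hh)
      rcases le_or_gt σ x with hcase | hcase
      · have hlt : σ < x := lt_of_le_of_ne hcase (Ne.symm hxne)
        have hk := hKEY' σ x hσ hx.1 hcase
        rw [slope_def_field, abs_div]
        have habs1 : |x - σ| = x - σ := abs_of_nonneg (by linarith)
        rw [max_eq_right hcase, habs1, div_le_iff₀ (by linarith : (0:ℝ) < x - σ)]
        calc |Φ x - Φ σ| ≤ C * ((x - σ) * (ψ x + (x - σ) * Mφ)) := hk
          _ = C * (ψ x + (x - σ) * Mφ) * (x - σ) := by ring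
      · have hk := hKEY' x σ hx.1 hσ hcase.le
        rw [slope_def_field, abs_div, abs_sub_comm (Φ x) (Φ σ), abs_sub_comm x σ,
          max_eq_left hcase.le]
        have habs2 : |σ - x| = σ - x := abs_of_nonneg (by linarith)
        rw [habs2, div_le_iff₀ (by linarith : (0:ℝ) < σ - x)]
        calc |Φ σ - Φ x| ≤ C * ((σ - x) * (ψ σ + (σ - x) * Mφ)) := hk
          _ = C * (ψ σ + (σ - x) * Mφ) * (σ - x) := by ring
    have hcontRHS : Continuous fun x => C * (ψ (max σ x) + |x - σ| * Mφ) :=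
      continuous_const.mul ((hψcont.comp (continuous_const.max continuous_id)).add
        (((continuous_id.sub continuous_const).abs).mul continuous_const))
    have htend2 : Filter.Tendsto (fun x => C * (ψ (max σ x) + |x - σ| * Mφ))
        (𝓝[Icc a b \ {σ}] σ) (𝓝 (C * ψ σ)) := by
      have h0 := hcontRHS.tendsto σ
      simp only [max_self, sub_self, abs_zero, zero_mul, add_zero] at h0
      exact h0.mono_left nhdsWithin_le_nhds
    have htend1 : Filter.Tendsto (fun x => |slope Φ σ x|)
        (𝓝[Icc a b \ {σ}] σ) (𝓝 |g0 σ|) :=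
      (continuous_abs.tendsto _).comp hW
    haveI := hne
    exact le_of_tendsto_of_tendsto htend1 htend2
      (Filter.Eventually.mono self_mem_nhdsWithin (fun x hx => hslope x hx))
  -- Gronwall argument
  have hφle : ∀ σ ∈ Icc a b, |φ σ| ≤ C / m * ψ σ := by
    intro σ hσ
    have h1 := hder σ hσ
    have h2 : m * |φ σ| ≤ |G σ σ| * |φ σ| :=
      mul_le_mul_of_nonneg_right (hmG σ hσ) (abs_nonneg _)
    have h3 : |G σ σ| * |φ σ| = |g0 σ| := by rw [hg0]; simp only [abs_mul]
    rw [div_mul_eq_mul_div, le_div_iff₀ hm]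
    calc |φ σ| * m = m * |φ σ| := by ring
      _ ≤ |g0 σ| := by rw [← h3]; exact h2
      _ ≤ C * ψ σ := h1
  have hψder : ∀ x ∈ Ico a b, HasDerivWithinAt ψ (|φ x|) (Ici x) x := by
    intro x hx
    have hda : HasDerivAt ψ (|φ x|) x :=
      intervalIntegral.integral_hasDerivAt_right
        (hφa.intervalIntegrable (μ := volume) a x)
        hφa.stronglyMeasurable.stronglyMeasurableAtFilter hφa.continuousAt
    exact hda.hasDerivWithinAt
  have hgron := norm_le_gronwallBound_of_norm_deriv_right_le (f := ψ)
    (f' := fun x => |φ x|) (δ := 0) (K := C / m) (ε := 0) (a := a) (b := b)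
    hψcont.continuousOn hψder (by rw [hψ]; simp) ?_
  · intro σ hσ
    have h1 := hgron σ hσ
    rw [gronwallBound_ε0_δ0, Real.norm_eq_abs, abs_of_nonneg (hψ0 σ hσ.1)] at h1
    have h2 : ψ σ = 0 := le_antisymm h1 (hψ0 σ hσ.1)
    have h3 := hφle σ hσ
    rw [h2, mul_zero] at h3
    have h4 : |φ σ| = 0 := le_antisymm h3 (abs_nonneg _)
    exact abs_eq_zero.1 h4
  · intro x hx
    rw [Real.norm_eq_abs, Real.norm_eq_abs, abs_abs, abs_of_nonneg (hψ0 x hx.1), add_zero]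
    exact hφle x ⟨hx.1, hx.2.le⟩




end AbelProof

open AbelProof in
/-- The homogeneous generalized Abel integral equation has only the zero solution. -/
theorem abel_homogeneous {a b : ℝ} (hab : a < b) (α : ℝ) (hα : 0 < α) (hα1 : α < 1)
    (G : ℝ → ℝ → ℝ)
    (hG : ContDiffOn ℝ 1 (fun p : ℝ × ℝ => G p.1 p.2) (Icc a b ×ˢ Icc a b))
    (hdiag : ∀ s ∈ Icc a b, G s s ≠ 0)
    (φ : ℝ → ℝ) (hφ : ContinuousOn φ (Icc a b))
    (heq : ∀ s ∈ Icc a b, ∫ t in a..s, G s t / (s - t) ^ α * φ t = 0) :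
    EqOn φ 0 (Icc a b) := by
  -- the retraction onto [a, b]
  set pr : ℝ → ℝ := fun x => ↑(projIcc a b hab.le x) with hpr
  have hprc : Continuous pr := (continuous_projIcc).subtype_val
  have hprmem : ∀ x, pr x ∈ Icc a b := fun x => (projIcc a b hab.le x).2
  have hprid : ∀ x ∈ Icc a b, pr x = x := by
    intro x hx; rw [hpr]; simp only [projIcc_of_mem hab.le hx]
  have hprlip : ∀ x y, |pr x - pr y| ≤ |x - y| := by
    intro x y
    have h1 := (LipschitzWith.projIcc hab.le).dist_le_mul x y
    rw [Subtype.dist_eq, NNReal.coe_one, one_mul, Real.dist_eq, Real.dist_eq] at h1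
    exact h1
  -- extended data
  set G' : ℝ → ℝ → ℝ := fun s t => G (pr s) (pr t) with hG'
  set φ' : ℝ → ℝ := fun t => φ (pr t) with hφ'
  set sq : Set (ℝ × ℝ) := Icc a b ×ˢ Icc a b with hsq
  have hsqc : IsCompact sq := isCompact_Icc.prod isCompact_Icc
  have hsqconv : Convex ℝ sq := (convex_Icc a b).prod (convex_Icc a b)
  have hsqmem : ∀ p : ℝ × ℝ, (pr p.1, pr p.2) ∈ sq := fun p => ⟨hprmem p.1, hprmem p.2⟩
  have hGcOn : ContinuousOn (fun p : ℝ × ℝ => G p.1 p.2) sq := hG.continuousOn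
  have hG'c : Continuous fun p : ℝ × ℝ => G' p.1 p.2 := by
    have := hGcOn.comp_continuous
      ((hprc.comp continuous_fst).prodMk (hprc.comp continuous_snd)) hsqmem
    exact this
  have hφ'c : Continuous φ' := hφ.comp_continuous hprc hprmem
  -- Lipschitz bound from the C¹ assumption
  have hsqU : UniqueDiffOn ℝ sq := (uniqueDiffOn_Icc hab).prod (uniqueDiffOn_Icc hab)
  have hdiffOn : DifferentiableOn ℝ (fun p : ℝ × ℝ => G p.1 p.2) sq :=
    hG.differentiableOn one_ne_zero
  have hcontD : ContinuousOn
      (fun x => fderivWithin ℝ (fun p : ℝ × ℝ => G p.1 p.2) sq x) sq :=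
    hG.continuousOn_fderivWithin hsqU le_rfl
  obtain ⟨B, hB⟩ := hsqc.exists_bound_of_continuousOn hcontD
  have hB0 : 0 ≤ B :=
    (norm_nonneg _).trans (hB (a, a) ⟨⟨le_rfl, hab.le⟩, ⟨le_rfl, hab.le⟩⟩)
  have hBnn : ∀ x ∈ sq, ‖fderivWithin ℝ (fun p : ℝ × ℝ => G p.1 p.2) sq x‖₊ ≤ B.toNNReal := by
    intro x hx
    have h1 := hB x hx
    rw [← Real.coe_toNNReal B hB0] at h1
    exact_mod_cast h1
  have hLip : LipschitzOnWith B.toNNReal (fun p : ℝ × ℝ => G p.1 p.2) sq :=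
    hsqconv.lipschitzOnWith_of_nnnorm_fderivWithin_le hdiffOn hBnn
  set L : ℝ := (B.toNNReal : ℝ) with hL
  have hL0 : 0 ≤ L := NNReal.coe_nonneg _
  have hG'l : ∀ p q : ℝ × ℝ, |G' p.1 p.2 - G' q.1 q.2| ≤ L * max |p.1 - q.1| |p.2 - q.2| := by
    intro p q
    have h1 := hLip.dist_le_mul (pr p.1, pr p.2) (hsqmem p) (pr q.1, pr q.2) (hsqmem q)
    rw [Prod.dist_eq, Real.dist_eq, Real.dist_eq, Real.dist_eq] at h1
    have h2 : max |pr p.1 - pr q.1| |pr p.2 - pr q.2| ≤ max |p.1 - q.1| |p.2 - q.2| :=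
      max_le_max (hprlip _ _) (hprlip _ _)
    calc |G' p.1 p.2 - G' q.1 q.2| ≤ L * max |pr p.1 - pr q.1| |pr p.2 - pr q.2| := h1
      _ ≤ L * max |p.1 - q.1| |p.2 - q.2| := mul_le_mul_of_nonneg_left h2 hL0
  -- minimum of |G s s| on the diagonal
  have hdc : ContinuousOn (fun s => |G' s s|) (Icc a b) :=
    ((hG'c.comp (continuous_id.prodMk continuous_id)).abs).continuousOn
  obtain ⟨x₀, hx₀, hmin⟩ := isCompact_Icc.exists_isMinOn (nonempty_Icc.2 hab.le) hdc
  set m : ℝ := |G' x₀ x₀| with hmdef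
  have hm : 0 < m := by
    rw [hmdef, hG']
    simp only [hprid x₀ hx₀]
    exact abs_pos.2 (hdiag x₀ hx₀)
  have hmG : ∀ s ∈ Icc a b, m ≤ |G' s s| := fun s hs => hmin hs
  -- the integral equation for the extended data
  have heq' : ∀ s ∈ Icc a b, ∫ t in a..s, G' s t / (s - t) ^ α * φ' t = 0 := by
    intro s hs
    have hcong : ∫ t in a..s, G' s t / (s - t) ^ α * φ' t
        = ∫ t in a..s, G s t / (s - t) ^ α * φ t := by
      apply intervalIntegral.integral_congr
      intro t ht
      rw [uIcc_of_le hs.1] at ht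
      have htb : t ∈ Icc a b := ⟨ht.1, ht.2.trans hs.2⟩
      rw [hG', hφ']
      simp only [hprid t htb, hprid s hs]
    rw [hcong]
    exact heq s hs
  -- apply the main lemma
  have hzero := aux hα hα1 hab hG'c hL0 hG'l hφ'c heq' hm hmG
  intro s hs
  have h1 := hzero hs
  rw [hφ'] at h1
  simp only [hprid s hs] at h1
  exact h1
end

section
/- Let $m \geq 1$, $\varphi \in C^1([a,b])$, and let $K(s,t)$ be smooth on $[a,b]^2$ such that $\partial_s^j K(s,t)|_{t=s} = 0$ for $0 \leq j \leq m-2$ and $\partial_s^{m-1} K(s,t)|_{t=s} \neq 0$ for all $s \in [a,b]$. If $\int_a^s K(s,t)\varphi(t)\,dt = 0$ for all $s \in [a,b]$, then $\varphi \equiv 0$ on $[a,b]$. -/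
open MeasureTheory Set intervalIntegral
open scoped Topology
noncomputable def pdAux (a b : ℝ) (f : ℝ × ℝ → ℝ) : ℕ → ℝ × ℝ → ℝ
  | 0 => f
  | j+1 => fun p => fderivWithin ℝ (pdAux a b f j) (Icc a b ×ˢ Icc a b) p (1, 0)

lemma sqUD {a b : ℝ} (hab : a < b) : UniqueDiffOn ℝ (Icc a b ×ˢ Icc a b) :=
  (uniqueDiffOn_Icc hab).prod (uniqueDiffOn_Icc hab)

lemma pdAux_contDiffOn {a b : ℝ} (hab : a < b) {f : ℝ × ℝ → ℝ}
    (hf : ContDiffOn ℝ (⊤ : ℕ∞) f (Icc a b ×ˢ Icc a b)) (j : ℕ) :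
    ContDiffOn ℝ (⊤ : ℕ∞) (pdAux a b f j) (Icc a b ×ˢ Icc a b) := by
  induction j with
  | zero => exact hf.of_le (by simp)
  | succ j ih =>
    have h1 : ContDiffOn ℝ (⊤ : ℕ∞) (fderivWithin ℝ (pdAux a b f j) (Icc a b ×ˢ Icc a b))
        (Icc a b ×ˢ Icc a b) := ih.fderivWithin (sqUD hab) (by norm_num)
    exact h1.clm_apply contDiffOn_const

lemma pdAux_hasDeriv {a b : ℝ} (hab : a < b) {f : ℝ × ℝ → ℝ}
    (hf : ContDiffOn ℝ (⊤ : ℕ∞) f (Icc a b ×ˢ Icc a b)) (j : ℕ) {p : ℝ × ℝ}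
    (hp : p ∈ Icc a b ×ˢ Icc a b) :
    HasDerivWithinAt (fun x => pdAux a b f j (x, p.2)) (pdAux a b f (j+1) p) (Icc a b) p.1 := by
  have hd : HasFDerivWithinAt (pdAux a b f j)
      (fderivWithin ℝ (pdAux a b f j) (Icc a b ×ˢ Icc a b) p) (Icc a b ×ˢ Icc a b) p :=
    (((pdAux_contDiffOn hab hf j).differentiableOn (by norm_num)) p hp).hasFDerivWithinAt
  have hl : HasDerivWithinAt (fun x : ℝ => (x, p.2)) ((1 : ℝ), (0 : ℝ)) (Icc a b) p.1 :=
    ((hasDerivAt_id p.1).prodMk (hasDerivAt_const p.1 p.2)).hasDerivWithinAt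
  have := hd.comp_hasDerivWithinAt_of_eq p.1 hl
    (fun x hx => ⟨hx, hp.2⟩) (by simp)
  exact this

lemma interior_iterated {a b : ℝ} (g : ℝ → ℝ) (j : ℕ) {x : ℝ} (hx : x ∈ Ioo a b) :
    iteratedDerivWithin j g (Icc a b) x = iteratedDeriv j g x := by
  rw [← iteratedDerivWithin_univ, iteratedDerivWithin_eq_iteratedFDerivWithin,
    iteratedDerivWithin_eq_iteratedFDerivWithin]
  congr 1
  exact iteratedFDerivWithin_congr_set
    (Filter.eventuallyEq_univ.2 (Filter.eventually_of_mem (Icc_mem_nhds hx.1 hx.2) fun y hy => hy)) j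

lemma eq_at_of_eqOn_Ioo {a b s : ℝ} (hab : a < b) (hs : s ∈ Icc a b) {h H : ℝ → ℝ}
    (heq : EqOn h H (Ioo a b))
    (hh : Filter.Tendsto h (nhdsWithin s (Ioo a b)) (nhds (h s)))
    (hH : Filter.Tendsto H (nhdsWithin s (Ioo a b)) (nhds (H s))) : h s = H s := by
  have hne : (nhdsWithin s (Ioo a b)).NeBot := by
    rw [← mem_closure_iff_nhdsWithin_neBot, closure_Ioo hab.ne]
    exact hs
  have : Filter.Tendsto h (nhdsWithin s (Ioo a b)) (nhds (H s)) :=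
    hH.congr' (Filter.eventually_of_mem self_mem_nhdsWithin fun y hy => (heq hy).symm)
  exact tendsto_nhds_unique hh this

lemma pdAux_eq_iterated {a b : ℝ} (hab : a < b) {f : ℝ × ℝ → ℝ}
    (hf : ContDiffOn ℝ (⊤ : ℕ∞) f (Icc a b ×ˢ Icc a b)) (j : ℕ) {t : ℝ} (ht : t ∈ Icc a b)
    {s : ℝ} (hs : s ∈ Icc a b) :
    pdAux a b f j (s, t) = iteratedDerivWithin j (fun x => f (x, t)) (Icc a b) s := by
  induction j generalizing s with
  | zero => simp [pdAux]
  | succ j ih =>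
    rw [iteratedDerivWithin_succ]
    have h1 : pdAux a b f (j+1) (s, t) =
        derivWithin (fun x => pdAux a b f j (x, t)) (Icc a b) s :=
      ((pdAux_hasDeriv hab hf j (p := (s, t)) ⟨hs, ht⟩).derivWithin
        ((uniqueDiffOn_Icc hab) s hs)).symm
    rw [h1]
    exact derivWithin_congr (fun x hx => ih hx) (ih hs)

lemma diag_nonzero {a b : ℝ} (hab : a < b) (m : ℕ) (hm : 1 ≤ m) (K : ℝ → ℝ → ℝ)
    (hK : ContDiffOn ℝ (⊤ : ℕ∞) (fun p : ℝ × ℝ => K p.1 p.2) (Icc a b ×ˢ Icc a b))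
    (hnonzero : ∀ s ∈ Icc a b, iteratedDeriv (m - 1) (fun x => K x s) s ≠ 0)
    {s : ℝ} (hs : s ∈ Icc a b) : pdAux a b (fun p : ℝ × ℝ => K p.1 p.2) (m-1) (s, s) ≠ 0 := by
  set f : ℝ × ℝ → ℝ := fun p => K p.1 p.2 with hfdef
  obtain ⟨n, rfl⟩ : ∃ n, m = n + 1 := ⟨m - 1, (Nat.succ_pred_eq_of_pos hm).symm⟩
  simp only [Nat.add_sub_cancel] at hnonzero ⊢
  rcases Nat.eq_zero_or_pos n with rfl | hn
  · simpa [pdAux] using hnonzero s hs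
  obtain ⟨k, rfl⟩ : ∃ k, n = k + 1 := ⟨n - 1, (Nat.succ_pred_eq_of_pos hn).symm⟩
  set g : ℝ → ℝ := fun x => K x s with hgdef
  have hnz : deriv (iteratedDeriv k g) s ≠ 0 := by
    have := hnonzero s hs
    rwa [iteratedDeriv_succ] at this
  set h : ℝ → ℝ := iteratedDeriv k g with hhdef
  have hdiff : DifferentiableAt ℝ h s := by
    by_contra hc
    exact hnz (deriv_zero_of_not_differentiableAt hc)
  set H : ℝ → ℝ := fun x => pdAux a b f k (x, s) with hHdef
  have heqOn : EqOn h H (Ioo a b) := by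
    intro x hx
    have h1 : iteratedDeriv k g x = iteratedDerivWithin k g (Icc a b) x :=
      (interior_iterated g k hx).symm
    have h2 : pdAux a b f k (x, s) = iteratedDerivWithin k g (Icc a b) x :=
      pdAux_eq_iterated hab hK k hs (Ioo_subset_Icc_self hx)
    show iteratedDeriv k g x = pdAux a b f k (x, s)
    rw [h1, h2]
  have hHcont : ContinuousWithinAt H (Icc a b) s := by
    have : ContinuousOn H (Icc a b) := by
      have hc := (pdAux_contDiffOn hab hK k).continuousOn
      exact hc.comp (Continuous.continuousOn (by fun_prop)) (fun x hx => ⟨hx, hs⟩)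
    exact this s hs
  have hvaleq : h s = H s := by
    apply eq_at_of_eqOn_Ioo hab hs heqOn
    · exact (hdiff.continuousAt.tendsto).mono_left nhdsWithin_le_nhds
    · exact hHcont.tendsto.mono_left (nhdsWithin_mono s Ioo_subset_Icc_self)
  have hd1 : HasDerivWithinAt H (deriv h s) (Ioo a b) s :=
    (hdiff.hasDerivAt.hasDerivWithinAt (s := Ioo a b)).congr heqOn.symm hvaleq.symm
  have hd2 : HasDerivWithinAt H (pdAux a b f (k+1) (s, s)) (Ioo a b) s :=
    (pdAux_hasDeriv hab hK k (p := (s, s)) ⟨hs, hs⟩).mono Ioo_subset_Icc_self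
  have hud : UniqueDiffWithinAt ℝ (Ioo a b) s := by
    apply uniqueDiffWithinAt_convex (convex_Ioo a b)
    · rw [interior_Ioo]; exact ⟨(a+b)/2, by constructor <;> linarith⟩
    · rw [closure_Ioo hab.ne]; exact hs
  have := hud.eq_deriv _ hd2 hd1
  rw [this]; exact hnz

lemma diag_vanish {a b : ℝ} (hab : a < b) (m : ℕ) (K : ℝ → ℝ → ℝ)
    (hK : ContDiffOn ℝ (⊤ : ℕ∞) (fun p : ℝ × ℝ => K p.1 p.2) (Icc a b ×ˢ Icc a b))
    (hvanish : ∀ j : ℕ, j + 2 ≤ m → ∀ s ∈ Icc a b, iteratedDeriv j (fun x => K x s) s = 0)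
    (j : ℕ) (hj : j + 2 ≤ m) {s : ℝ} (hs : s ∈ Ioo a b) :
    pdAux a b (fun p : ℝ × ℝ => K p.1 p.2) j (s, s) = 0 := by
  have hs' : s ∈ Icc a b := Ioo_subset_Icc_self hs
  have h2 : pdAux a b (fun p : ℝ × ℝ => K p.1 p.2) j (s, s) =
      iteratedDerivWithin j (fun x => K x s) (Icc a b) s :=
    pdAux_eq_iterated hab hK j hs' hs'
  rw [h2, interior_iterated _ j hs]
  exact hvanish j hj s hs'

section Leibniz

variable {a b : ℝ} (hab : a < b) {K : ℝ → ℝ → ℝ}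
  (hK : ContDiffOn ℝ (⊤ : ℕ∞) (fun p : ℝ × ℝ => K p.1 p.2) (Icc a b ×ˢ Icc a b))
  {φ : ℝ → ℝ} (hφ : ContinuousOn φ (Icc a b))

include hab hK hφ

lemma qCont (j : ℕ) :
    ContinuousOn (fun p : ℝ × ℝ => pdAux a b (fun p : ℝ × ℝ => K p.1 p.2) j p * φ p.2)
      (Icc a b ×ˢ Icc a b) :=
  (pdAux_contDiffOn hab hK j).continuousOn.mul
    (hφ.comp continuous_snd.continuousOn (fun p hp => hp.2))

lemma qSliceCont (j : ℕ) {x : ℝ} (hx : x ∈ Icc a b) :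
    ContinuousOn (fun t : ℝ => pdAux a b (fun p : ℝ × ℝ => K p.1 p.2) j (x, t) * φ t)
      (Icc a b) :=
  (qCont hab hK hφ j).comp (Continuous.continuousOn (by fun_prop)) (fun t ht => ⟨hx, ht⟩)

lemma qInt (j : ℕ) {x : ℝ} (hx : x ∈ Icc a b) {c d : ℝ} (hc : c ∈ Icc a b) (hd : d ∈ Icc a b) :
    IntervalIntegrable (fun t : ℝ => pdAux a b (fun p : ℝ × ℝ => K p.1 p.2) j (x, t) * φ t)
      volume c d :=
  ((qSliceCont hab hK hφ j hx).mono (uIcc_subset_Icc hc hd)).intervalIntegrable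

lemma leibniz (j : ℕ) {s₀ : ℝ} (hs₀ : s₀ ∈ Ioo a b) :
    HasDerivAt (fun s => ∫ t in a..s, pdAux a b (fun p : ℝ × ℝ => K p.1 p.2) j (s, t) * φ t)
      ((∫ t in a..s₀, pdAux a b (fun p : ℝ × ℝ => K p.1 p.2) (j+1) (s₀, t) * φ t) +
        pdAux a b (fun p : ℝ × ℝ => K p.1 p.2) j (s₀, s₀) * φ s₀) s₀ := by
  set f : ℝ × ℝ → ℝ := fun p => K p.1 p.2 with hfdef
  set q : ℕ → ℝ × ℝ → ℝ := fun j p => pdAux a b f j p * φ p.2 with hqdef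
  have hs₀' : s₀ ∈ Icc a b := Ioo_subset_Icc_self hs₀
  have haI : a ∈ Icc a b := left_mem_Icc.2 hab.le
  obtain ⟨ε, εpos, hball⟩ : ∃ ε > 0, Metric.ball s₀ ε ⊆ Ioo a b :=
    Metric.isOpen_iff.1 isOpen_Ioo s₀ hs₀
  -- bound for q (j+1) on the square
  obtain ⟨C, hC⟩ : ∃ C, ∀ p ∈ Icc a b ×ˢ Icc a b, ‖q (j+1) p‖ ≤ C :=
    (isCompact_Icc.prod isCompact_Icc).exists_bound_of_continuousOn (qCont hab hK hφ (j+1))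
  have hIsub : uIoc a s₀ ⊆ Icc a b := by
    rw [uIoc_of_le hs₀'.1]
    exact fun t ht => ⟨ht.1.le, ht.2.trans hs₀'.2⟩
  -- Part 1 : fixed upper limit, moving parameter
  have part1 : HasDerivAt (fun s => ∫ t in a..s₀, q j (s, t))
      (∫ t in a..s₀, q (j+1) (s₀, t)) s₀ := by
    have := (intervalIntegral.hasDerivAt_integral_of_dominated_loc_of_deriv_le
      (F := fun s t => q j (s, t)) (F' := fun s t => q (j+1) (s, t)) (x₀ := s₀)
      (a := a) (b := s₀) (μ := volume) (bound := fun _ => C) (Metric.ball_mem_nhds s₀ εpos) ?_ ?_ ?_ ?_ ?_ ?_).2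
    · exact this
    · filter_upwards [Ioo_mem_nhds hs₀.1 hs₀.2] with x hx
      exact ((qSliceCont hab hK hφ j (Ioo_subset_Icc_self hx)).mono hIsub).aestronglyMeasurable
        measurableSet_uIoc
    · exact qInt hab hK hφ j hs₀' haI hs₀'
    · exact ((qSliceCont hab hK hφ (j+1) hs₀').mono hIsub).aestronglyMeasurable
        measurableSet_uIoc
    · apply Filter.Eventually.of_forall
      intro t ht x hx
      exact hC (x, t) ⟨Ioo_subset_Icc_self (hball hx), hIsub ht⟩
    · exact intervalIntegrable_const
    · apply Filter.Eventually.of_forall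
      intro t ht x hx
      have hxIoo := hball hx
      have hd := pdAux_hasDeriv hab hK j (p := (x, t)) ⟨Ioo_subset_Icc_self hxIoo, hIsub ht⟩
      exact (hd.hasDerivAt (Icc_mem_nhds hxIoo.1 hxIoo.2)).mul_const (φ t)
  -- Part 2 : moving upper limit
  have part2 : HasDerivAt (fun s => ∫ t in s₀..s, q j (s, t)) (q j (s₀, s₀)) s₀ := by
    rw [hasDerivAt_iff_isLittleO]
    rw [Asymptotics.isLittleO_iff]
    intro c hc
    obtain ⟨δ, δpos, hδ⟩ := Metric.continuousWithinAt_iff.1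
      ((qCont hab hK hφ j) (s₀, s₀) ⟨hs₀', hs₀'⟩) c hc
    filter_upwards [Ioo_mem_nhds hs₀.1 hs₀.2, Metric.ball_mem_nhds s₀ δpos] with s hsIoo hsball
    have hsIcc : s ∈ Icc a b := Ioo_subset_Icc_self hsIoo
    have huIcc : uIcc s₀ s ⊆ Icc a b := uIcc_subset_Icc hs₀' hsIcc
    have hint : IntervalIntegrable (fun t => q j (s, t)) volume s₀ s :=
      qInt hab hK hφ j hsIcc hs₀' hsIcc
    have key : ∀ t ∈ uIoc s₀ s, ‖q j (s, t) - q j (s₀, s₀)‖ ≤ c := by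
      intro t ht
      have htIcc : t ∈ Icc a b := huIcc (uIoc_subset_uIcc ht)
      have htd : |t - s₀| ≤ |s - s₀| := by
        rcases le_total s₀ s with h | h
        · rw [uIoc_of_le h] at ht
          rw [abs_of_nonneg (by linarith [ht.1.le] : (0:ℝ) ≤ t - s₀),
            abs_of_nonneg (by linarith : (0:ℝ) ≤ s - s₀)]
          linarith [ht.2]
        · rw [uIoc_of_ge h] at ht
          rw [abs_of_nonpos (by linarith [ht.2] : t - s₀ ≤ 0),
            abs_of_nonpos (by linarith : s - s₀ ≤ 0)]
          linarith [ht.1.le]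
      have hdist : dist (s, t) (s₀, s₀) < δ := by
        rw [Prod.dist_eq]
        rw [Metric.mem_ball, Real.dist_eq] at hsball
        simp only [Real.dist_eq]
        exact max_lt hsball (lt_of_le_of_lt htd hsball)
      have := hδ (⟨hsIcc, htIcc⟩ : (s, t) ∈ Icc a b ×ˢ Icc a b) hdist
      rw [Real.dist_eq] at this
      exact this.le
    calc ‖(∫ t in s₀..s, q j (s, t)) - (∫ t in s₀..s₀, q j (s₀, t)) - (s - s₀) • q j (s₀, s₀)‖
        = ‖∫ t in s₀..s, (q j (s, t) - q j (s₀, s₀))‖ := by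
          rw [intervalIntegral.integral_same, sub_zero,
            intervalIntegral.integral_sub hint intervalIntegrable_const,
            intervalIntegral.integral_const]
      _ ≤ c * |s - s₀| := intervalIntegral.norm_integral_le_of_norm_le_const key
      _ = c * ‖s - s₀‖ := by rw [Real.norm_eq_abs]
  -- combine
  have hsum := part1.add part2
  apply hsum.congr_of_eventuallyEq
  filter_upwards [Ioo_mem_nhds hs₀.1 hs₀.2] with s hs
  have hsIcc : s ∈ Icc a b := Ioo_subset_Icc_self hs
  have h1 : IntervalIntegrable (fun t => q j (s, t)) volume a s₀ :=
    qInt hab hK hφ j hsIcc haI hs₀'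
  have h2 : IntervalIntegrable (fun t => q j (s, t)) volume s₀ s :=
    qInt hab hK hφ j hsIcc hs₀' hsIcc
  exact (intervalIntegral.integral_add_adjacent_intervals h1 h2).symm

end Leibniz

/-- Lemma 2.6: Volterra equation of the first kind whose kernel's `s`-derivatives up
to order `m - 2` vanish on the diagonal, with the `(m-1)`-th derivative nowhere zero there. -/
theorem volterra_vanishing_derivatives {a b : ℝ} (hab : a < b) (m : ℕ) (hm : 1 ≤ m)
    (K : ℝ → ℝ → ℝ)
    (hK : ContDiffOn ℝ (⊤ : ℕ∞) (fun p : ℝ × ℝ => K p.1 p.2) (Icc a b ×ˢ Icc a b))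
    (hvanish : ∀ j : ℕ, j + 2 ≤ m → ∀ s ∈ Icc a b, iteratedDeriv j (fun x => K x s) s = 0)
    (hnonzero : ∀ s ∈ Icc a b, iteratedDeriv (m - 1) (fun x => K x s) s ≠ 0)
    (φ : ℝ → ℝ) (hφ : ContDiffOn ℝ 1 φ (Icc a b))
    (heq : ∀ s ∈ Icc a b, ∫ t in a..s, K s t * φ t = 0) :
    EqOn φ 0 (Icc a b) := by
  have hφc : ContinuousOn φ (Icc a b) := hφ.continuousOn
  set f : ℝ × ℝ → ℝ := fun p => K p.1 p.2 with hfdef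
  have haI : a ∈ Icc a b := left_mem_Icc.2 hab.le
  -- all predecessors of the diagonal identity vanish
  have Fzero : ∀ j, j ≤ m - 1 → ∀ s ∈ Ioo a b,
      (∫ t in a..s, pdAux a b f j (s, t) * φ t) = 0 := by
    intro j
    induction j with
    | zero =>
      intro _ s hs
      exact heq s (Ioo_subset_Icc_self hs)
    | succ j ih =>
      intro hj s₀ hs₀
      have ihz := ih (le_trans (Nat.le_succ j) hj)
      have hD := leibniz hab hK hφc j hs₀
      have ev : (fun s => ∫ t in a..s, pdAux a b f j (s, t) * φ t) =ᶠ[𝓝 s₀]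
          (fun _ => (0:ℝ)) := by
        filter_upwards [Ioo_mem_nhds hs₀.1 hs₀.2] with s hs using ihz s hs
      have hzero : HasDerivAt (fun _ : ℝ => (0:ℝ))
          ((∫ t in a..s₀, pdAux a b f (j+1) (s₀, t) * φ t) +
            pdAux a b f j (s₀, s₀) * φ s₀) s₀ := hD.congr_of_eventuallyEq ev.symm
      have hv : (0:ℝ) = (∫ t in a..s₀, pdAux a b f (j+1) (s₀, t) * φ t) +
          pdAux a b f j (s₀, s₀) * φ s₀ := (hasDerivAt_const s₀ (0:ℝ)).unique hzero
      have hdiag : pdAux a b f j (s₀, s₀) = 0 :=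
        diag_vanish hab m K hK hvanish j (by omega) hs₀
      rw [hdiag, zero_mul, add_zero] at hv
      exact hv.symm
  -- the second-kind Volterra identity on the interior
  have volterra2 : ∀ s ∈ Ioo a b,
      pdAux a b f (m-1) (s, s) * φ s = -(∫ t in a..s, pdAux a b f m (s, t) * φ t) := by
    intro s₀ hs₀
    have hD := leibniz hab hK hφc (m-1) hs₀
    rw [Nat.sub_add_cancel hm] at hD
    have ev : (fun s => ∫ t in a..s, pdAux a b f (m-1) (s, t) * φ t) =ᶠ[𝓝 s₀]
        (fun _ => (0:ℝ)) := by
      filter_upwards [Ioo_mem_nhds hs₀.1 hs₀.2] with s hs using Fzero (m-1) le_rfl s hs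
    have hzero : HasDerivAt (fun _ : ℝ => (0:ℝ))
        ((∫ t in a..s₀, pdAux a b f m (s₀, t) * φ t) +
          pdAux a b f (m-1) (s₀, s₀) * φ s₀) s₀ := hD.congr_of_eventuallyEq ev.symm
    have hv := (hasDerivAt_const s₀ (0:ℝ)).unique hzero
    linarith [hv]
  -- uniform bounds
  have hgcont : ContinuousOn (fun s => pdAux a b f (m-1) (s, s)) (Icc a b) :=
    (pdAux_contDiffOn hab hK (m-1)).continuousOn.comp
      (Continuous.continuousOn (by fun_prop)) (fun s hs => ⟨hs, hs⟩)
  obtain ⟨s₁, hs₁, hmin⟩ := isCompact_Icc.exists_isMinOn (nonempty_Icc.2 hab.le)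
    hgcont.abs
  set c : ℝ := |pdAux a b f (m-1) (s₁, s₁)| with hcdef
  have hcpos : 0 < c := abs_pos.2 (diag_nonzero hab m hm K hK hnonzero hs₁)
  have hcle : ∀ s ∈ Icc a b, c ≤ |pdAux a b f (m-1) (s, s)| := fun s hs =>
    hmin hs
  obtain ⟨B, hB⟩ : ∃ B, ∀ p ∈ Icc a b ×ˢ Icc a b, ‖pdAux a b f m p‖ ≤ B :=
    (isCompact_Icc.prod isCompact_Icc).exists_bound_of_continuousOn
      (pdAux_contDiffOn hab hK m).continuousOn
  have hB0 : 0 ≤ B := le_trans (norm_nonneg _) (hB (a, a) ⟨haI, haI⟩)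
  obtain ⟨M, hM⟩ : ∃ M, ∀ s ∈ Icc a b, ‖φ s‖ ≤ M :=
    isCompact_Icc.exists_bound_of_continuousOn hφc
  have hM0 : 0 ≤ M := le_trans (norm_nonneg _) (hM a haI)
  set Cq : ℝ := B / c with hCdef
  have hCq0 : 0 ≤ Cq := div_nonneg hB0 hcpos.le
  -- iterated Gronwall bound
  have gron : ∀ n : ℕ, ∀ s ∈ Ioo a b, |φ s| ≤ M * Cq ^ n * (s - a) ^ n / n.factorial := by
    intro n
    induction n with
    | zero =>
      intro s hs
      simpa using hM s (Ioo_subset_Icc_self hs)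
    | succ n ih =>
      intro s hs
      have hsIcc : s ∈ Icc a b := Ioo_subset_Icc_self hs
      have has : a ≤ s := hsIcc.1
      -- the integral inequality
      have hid := volterra2 s hs
      have habs : c * |φ s| ≤ ∫ t in a..s, B * (M * Cq ^ n * (t - a) ^ n / n.factorial) := by
        have h1 : c * |φ s| ≤ |pdAux a b f (m-1) (s, s)| * |φ s| :=
          mul_le_mul_of_nonneg_right (hcle s hsIcc) (abs_nonneg _)
        have h2 : |pdAux a b f (m-1) (s, s)| * |φ s| =
            ‖∫ t in a..s, pdAux a b f m (s, t) * φ t‖ := by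
          rw [← abs_mul, hid, abs_neg, Real.norm_eq_abs]
        have h3 : ‖∫ t in a..s, pdAux a b f m (s, t) * φ t‖ ≤
            ∫ t in a..s, ‖pdAux a b f m (s, t) * φ t‖ :=
          intervalIntegral.norm_integral_le_integral_norm has
        have h4 : (∫ t in a..s, ‖pdAux a b f m (s, t) * φ t‖) ≤
            ∫ t in a..s, B * (M * Cq ^ n * (t - a) ^ n / n.factorial) := by
          apply intervalIntegral.integral_mono_ae_restrict has
          · exact (qInt hab hK hφc m hsIcc haI hsIcc).norm
          · apply ContinuousOn.intervalIntegrable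
            apply Continuous.continuousOn
            fun_prop
          · have hmem : ∀ᵐ t ∂(volume.restrict (Icc a s)), t ∈ Icc a s :=
              ae_restrict_mem measurableSet_Icc
            have hne : ∀ᵐ t ∂(volume.restrict (Icc a s)), t ≠ a := by
              have h0 : ∀ᵐ t : ℝ ∂volume, t ≠ a := by
                rw [ae_iff]
                simpa using Real.volume_singleton
              exact h0.filter_mono (ae_mono Measure.restrict_le_self)
            filter_upwards [hmem, hne] with t htmem htne
            have htIoo : t ∈ Ioo a b :=
              ⟨lt_of_le_of_ne htmem.1 (Ne.symm htne), lt_of_le_of_lt htmem.2 hs.2⟩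
            have hb1 : ‖pdAux a b f m (s, t)‖ ≤ B :=
              hB (s, t) ⟨hsIcc, Ioo_subset_Icc_self htIoo⟩
            have hb2 : ‖φ t‖ ≤ M * Cq ^ n * (t - a) ^ n / n.factorial := ih t htIoo
            rw [norm_mul]
            exact mul_le_mul hb1 hb2 (norm_nonneg _) hB0
        linarith
      have hcomp : (∫ t in a..s, B * (M * Cq ^ n * (t - a) ^ n / n.factorial)) =
          B * M * Cq ^ n / n.factorial * ((s - a) ^ (n+1) / (n+1)) := by
        have hpow : (∫ t in a..s, (t - a) ^ n) = (s - a) ^ (n+1) / (n+1) := by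
          rw [intervalIntegral.integral_comp_sub_right (fun u => u ^ n) a]
          simp [integral_pow]
        have : (∫ t in a..s, B * (M * Cq ^ n * (t - a) ^ n / n.factorial)) =
            (B * M * Cq ^ n / n.factorial) * ∫ t in a..s, (t - a) ^ n := by
          rw [← intervalIntegral.integral_const_mul]
          congr 1
          ext t
          ring
        rw [this, hpow]
      rw [hcomp] at habs
      rw [← le_div_iff₀' hcpos] at habs
      calc |φ s| ≤ B * M * Cq ^ n / n.factorial * ((s - a) ^ (n+1) / (n+1)) / c := habs
        _ = M * Cq ^ (n+1) * (s - a) ^ (n+1) / (n+1).factorial := by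
            rw [hCdef]
            rw [Nat.factorial_succ]
            push_cast
            field_simp
            have hcB : c * (B / c) = B := mul_div_cancel₀ B hcpos.ne'
            rw [pow_succ]
            linear_combination (-(M * (s - a) ^ (n + 1) * (B / c) ^ n)) * hcB
  -- conclude φ = 0 on the interior
  have hIoo : ∀ s ∈ Ioo a b, φ s = 0 := by
    intro s hs
    have hlim : Filter.Tendsto (fun n : ℕ => M * ((Cq * (s - a)) ^ n / n.factorial))
        Filter.atTop (𝓝 (M * 0)) :=
      (FloorSemiring.tendsto_pow_div_factorial_atTop (Cq * (s - a))).const_mul M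
    rw [mul_zero] at hlim
    have hle : ∀ n : ℕ, |φ s| ≤ M * ((Cq * (s - a)) ^ n / n.factorial) := by
      intro n
      have := gron n s hs
      calc |φ s| ≤ M * Cq ^ n * (s - a) ^ n / n.factorial := this
        _ = M * ((Cq * (s - a)) ^ n / n.factorial) := by rw [mul_pow]; ring
    have : |φ s| ≤ 0 := ge_of_tendsto' hlim hle
    exact abs_eq_zero.1 (le_antisymm this (abs_nonneg _))
  -- extend to the closed interval by continuity
  intro s hs
  have h0 : EqOn φ (fun _ => (0:ℝ)) (Ioo a b) := fun x hx => hIoo x hx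
  have := eq_at_of_eqOn_Ioo hab hs h0
    ((hφc s hs).tendsto.mono_left (nhdsWithin_mono s Ioo_subset_Icc_self))
    tendsto_const_nhds
  simpa using this
end

section
/- Let $H$ be smooth with $H(0) \neq 0$ and $n \geq 2$, and define $H_1(x) = H'(x)\,x + (n-1)H(x)$. Then $H_1(0) \neq 0$, and if $F \in C([0,1])$ satisfies $\int_0^s F(u)\,H((su-u^2)^{1/2})(su-u^2)^{(n-1)/2}\,du = 0$ for all $s \in [0,1]$, then $\frac{d}{ds}$ of the left side gives $\int_0^s F(u)\,u\,H_1((su-u^2)^{1/2})(su-u^2)^{(n-3)/2}\,du = 0$ for all $s \in (0,1]$. -/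
open MeasureTheory Set intervalIntegral Real

lemma aux_rpow_shift {r : ℝ} (hr : -1 < r) (c a b : ℝ) :
    IntervalIntegrable (fun x => (x - c) ^ r) volume a b := by
  simpa using (intervalIntegrable_rpow' (a := a - c) (b := b - c) hr).comp_sub_right c

lemma aux_rpow_shift_left {r : ℝ} (hr : -1 < r) (c a b : ℝ) :
    IntervalIntegrable (fun x => (c - x) ^ r) volume a b := by
  simpa using (intervalIntegrable_rpow' (a := c - a) (b := c - b) hr).comp_sub_left c

lemma beta_II {r : ℝ} (hr : -1 < r) {σ : ℝ} (hσ : 0 < σ) :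
    IntervalIntegrable (fun u => u ^ r * (σ - u) ^ r) volume 0 σ := by
  have h1 : IntervalIntegrable (fun u => u ^ r * (σ - u) ^ r) volume 0 (σ/2) := by
    apply (intervalIntegrable_rpow' (a := 0) (b := σ/2) hr).mul_continuousOn
    intro x hx
    rw [uIcc_of_le (by linarith)] at hx
    have hpos : (0:ℝ) < σ - x := by
      have := hx.2; simp only [mem_Icc] at *; linarith
    exact ((continuous_const.sub continuous_id).continuousWithinAt).rpow_const
      (Or.inl (by simpa using hpos.ne'))
  have h2 : IntervalIntegrable (fun u => u ^ r * (σ - u) ^ r) volume (σ/2) σ := by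
    apply (aux_rpow_shift_left hr σ (σ/2) σ).continuousOn_mul
    intro x hx
    rw [uIcc_of_le (by linarith)] at hx
    have hpos : (0:ℝ) < x := by have := hx.1; linarith
    exact (continuous_id.continuousWithinAt).rpow_const (Or.inl hpos.ne')
  exact h1.trans h2



lemma inner_integrable {r : ℝ} (hr : -1 < r) {H₁ : ℝ → ℝ} (hH₁c : Continuous H₁)
    {M : ℝ} (hM : ∀ y ∈ Icc (0:ℝ) 1, |H₁ y| ≤ M)
    {u s : ℝ} (hu : 0 < u) (hus : u ≤ s) (hs1 : s ≤ 1) :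
    IntervalIntegrable (fun σ => u * H₁ (Real.sqrt (σ*u - u^2)) * (σ*u - u^2) ^ r)
      volume u s := by
  have hbase : Continuous fun σ : ℝ => σ * u - u ^ 2 :=
    (continuous_id.mul continuous_const).sub continuous_const
  apply IntervalIntegrable.mono_fun' (g := fun σ => (M * u ^ (r+1)) * (σ - u) ^ r)
    ((aux_rpow_shift hr u u s).const_mul _)
  · exact (((continuous_const.mul (hH₁c.comp (Real.continuous_sqrt.comp
      hbase))).measurable).mul (hbase.measurable.pow measurable_const)).aestronglyMeasurable
  · filter_upwards [ae_restrict_mem measurableSet_uIoc] with σ hσ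
    rw [uIoc_of_le hus] at hσ
    obtain ⟨h1, h2⟩ := hσ
    have hw : σ * u - u ^ 2 = u * (σ - u) := by ring
    have hσu : (0:ℝ) ≤ σ - u := by linarith
    have hw0 : 0 ≤ σ * u - u ^ 2 := by rw [hw]; positivity
    have hw1 : σ * u - u ^ 2 ≤ 1 := by nlinarith
    have hmem : Real.sqrt (σ * u - u ^ 2) ∈ Icc (0:ℝ) 1 :=
      ⟨Real.sqrt_nonneg _, Real.sqrt_le_one.mpr hw1⟩
    have hfac : (σ * u - u ^ 2) ^ r = u ^ r * (σ - u) ^ r := by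
      rw [hw, Real.mul_rpow hu.le hσu]
    have hM0 : 0 ≤ M := le_trans (abs_nonneg _) (hM 0 (by norm_num))
    calc ‖u * H₁ (Real.sqrt (σ*u - u^2)) * (σ*u - u^2) ^ r‖
        = u * |H₁ (Real.sqrt (σ*u - u^2))| * (u ^ r * (σ - u) ^ r) := by
          rw [Real.norm_eq_abs, abs_mul, abs_mul, hfac, abs_of_pos hu,
            abs_of_nonneg (mul_nonneg (Real.rpow_nonneg hu.le r) (Real.rpow_nonneg hσu r))]
      _ ≤ u * M * (u ^ r * (σ - u) ^ r) := by
          have := hM _ hmem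
          gcongr
      _ = (M * u ^ (r+1)) * (σ - u) ^ r := by
          rw [Real.rpow_add_one hu.ne']; ring

lemma inner_ftc {r : ℝ} (hr : -1 < r) {H H₁ : ℝ → ℝ} (hH : ContDiff ℝ (⊤ : ℕ∞) H)
    (hH₁d : ∀ x, H₁ x = deriv H x * x + (2*r+2) * H x) (hH₁c : Continuous H₁)
    {M : ℝ} (hM : ∀ y ∈ Icc (0:ℝ) 1, |H₁ y| ≤ M)
    {u s : ℝ} (hu : 0 < u) (hus : u ≤ s) (hs1 : s ≤ 1) :
    ∫ σ in u..s, u * H₁ (Real.sqrt (σ*u - u^2)) * (σ*u - u^2) ^ r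
      = 2 * H (Real.sqrt (s*u - u^2)) * (s*u - u^2) ^ (r+1) := by
  have hbase : Continuous fun σ : ℝ => σ * u - u ^ 2 :=
    (continuous_id.mul continuous_const).sub continuous_const
  have hr1 : (0:ℝ) < r + 1 := by linarith
  set φ : ℝ → ℝ := fun σ => 2 * H (Real.sqrt (σ*u - u^2)) * (σ*u - u^2) ^ (r+1) with hφ
  have hφc : Continuous φ :=
    (continuous_const.mul (hH.continuous.comp (Real.continuous_sqrt.comp hbase))).mul
      ((Real.continuous_rpow_const hr1.le).comp hbase)
  have hderiv : ∀ σ ∈ Ioo u s, HasDerivWithinAt φ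
      (u * H₁ (Real.sqrt (σ*u - u^2)) * (σ*u - u^2) ^ r) (Ioi σ) σ := by
    intro σ hσ
    have hw : (0:ℝ) < σ * u - u ^ 2 := by nlinarith [hσ.1, hu]
    set w := σ * u - u ^ 2 with hwdef
    have hwD : HasDerivAt (fun σ : ℝ => σ * u - u ^ 2) u σ := by
      simpa using ((hasDerivAt_id σ).mul_const u).sub_const (u ^ 2)
    have hsq : HasDerivAt Real.sqrt (1 / (2 * Real.sqrt w)) w := Real.hasDerivAt_sqrt hw.ne'
    have hHd : HasDerivAt H (deriv H (Real.sqrt w)) (Real.sqrt w) :=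
      (hH.differentiable (by simp) _).hasDerivAt
    have h1 : HasDerivAt (fun σ : ℝ => H (Real.sqrt (σ * u - u ^ 2)))
        (deriv H (Real.sqrt w) * (1 / (2 * Real.sqrt w)) * u) σ := by
      have := (hHd.comp w hsq).comp σ hwD
      exact this
    have h2 : HasDerivAt (fun σ : ℝ => (σ * u - u ^ 2) ^ (r+1)) ((r+1) * w ^ r * u) σ := by
      have hrp : HasDerivAt (fun x : ℝ => x ^ (r+1)) ((r+1) * w ^ r) w := by
        have := Real.hasDerivAt_rpow_const (x := w) (p := r+1) (Or.inl hw.ne')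
        simpa using this
      exact hrp.comp σ hwD
    have h3 : HasDerivAt φ
        (2 * (deriv H (Real.sqrt w) * (1 / (2 * Real.sqrt w)) * u) * w ^ (r+1)
          + 2 * H (Real.sqrt w) * ((r+1) * w ^ r * u)) σ := by
      have := ((h1.const_mul 2).mul h2)
      exact this
    have heq : 2 * (deriv H (Real.sqrt w) * (1 / (2 * Real.sqrt w)) * u) * w ^ (r+1)
          + 2 * H (Real.sqrt w) * ((r+1) * w ^ r * u)
        = u * H₁ (Real.sqrt w) * w ^ r := by
      have hsq0 : Real.sqrt w ≠ 0 := by positivity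
      have hss : Real.sqrt w * Real.sqrt w = w := Real.mul_self_sqrt hw.le
      have hpow : w ^ (r+1) = w ^ r * w := by
        rw [Real.rpow_add hw, Real.rpow_one]
      have key : ∀ (a dHa Ha A uu rr : ℝ), a ≠ 0 →
          2 * (dHa * (1 / (2 * a)) * uu) * (A * (a * a)) + 2 * Ha * ((rr + 1) * A * uu)
            = uu * (dHa * a + (2 * rr + 2) * Ha) * A := by
        intro a dHa Ha A uu rr ha; field_simp
      rw [hH₁d, hpow, show w ^ r * w = w ^ r * (Real.sqrt w * Real.sqrt w) from by rw [hss]]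
      exact key _ _ _ _ _ _ hsq0
    rw [← heq]
    exact h3.hasDerivWithinAt
  have hint := inner_integrable hr hH₁c hM hu hus hs1
  have := intervalIntegral.integral_eq_sub_of_hasDeriv_right_of_le hus
    hφc.continuousOn hderiv hint
  rw [this]
  have h0 : φ u = 0 := by
    have : u * u - u ^ 2 = 0 := by ring
    simp [hφ, this, Real.zero_rpow hr1.ne']
  rw [h0, sub_zero]

lemma gg_bound {r : ℝ} {Fc H₁ : ℝ → ℝ} {CF M : ℝ}
    (hCF : ∀ x, |Fc x| ≤ CF) (hM : ∀ y ∈ Icc (0:ℝ) 1, |H₁ y| ≤ M)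
    {σ u : ℝ} (hu : 0 < u) (huσ : u ≤ σ) (hσ1 : σ ≤ 1) :
    ‖Fc u * u * H₁ (Real.sqrt (σ*u - u^2)) * (σ*u - u^2) ^ r‖
      ≤ (CF * M) * (u ^ r * (σ - u) ^ r) := by
  have hCF0 : 0 ≤ CF := le_trans (abs_nonneg _) (hCF 0)
  have hM0 : 0 ≤ M := le_trans (abs_nonneg _) (hM 0 (by norm_num))
  have hσu : (0:ℝ) ≤ σ - u := by linarith
  have hw : σ * u - u ^ 2 = u * (σ - u) := by ring
  have hw0 : 0 ≤ σ * u - u ^ 2 := by rw [hw]; positivity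
  have hw1 : σ * u - u ^ 2 ≤ 1 := by nlinarith
  have hmem : Real.sqrt (σ * u - u ^ 2) ∈ Icc (0:ℝ) 1 :=
    ⟨Real.sqrt_nonneg _, Real.sqrt_le_one.mpr hw1⟩
  have hfac : (σ * u - u ^ 2) ^ r = u ^ r * (σ - u) ^ r := by
    rw [hw, Real.mul_rpow hu.le hσu]
  have hrn : 0 ≤ u ^ r * (σ - u) ^ r :=
    mul_nonneg (Real.rpow_nonneg hu.le r) (Real.rpow_nonneg hσu r)
  calc ‖Fc u * u * H₁ (Real.sqrt (σ*u - u^2)) * (σ*u - u^2) ^ r‖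
      = |Fc u| * u * |H₁ (Real.sqrt (σ*u - u^2))| * (u ^ r * (σ - u) ^ r) := by
        rw [Real.norm_eq_abs, abs_mul, abs_mul, abs_mul, hfac, abs_of_pos hu,
          abs_of_nonneg hrn]
    _ ≤ CF * 1 * M * (u ^ r * (σ - u) ^ r) := by
        have h1 := hCF u
        have h2 := hM _ hmem
        have hu1 : u ≤ 1 := le_trans huσ hσ1
        gcongr
    _ = (CF * M) * (u ^ r * (σ - u) ^ r) := by ring

lemma slice_int {r : ℝ} (hr : -1 < r) {Fc H₁ : ℝ → ℝ} (hFc : Continuous Fc)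
    (hH₁c : Continuous H₁) {CF M : ℝ}
    (hCF : ∀ x, |Fc x| ≤ CF) (hM : ∀ y ∈ Icc (0:ℝ) 1, |H₁ y| ≤ M)
    {σ : ℝ} (hσ : 0 < σ) (hσ1 : σ ≤ 1) :
    IntegrableOn (fun u => Fc u * u * H₁ (Real.sqrt (σ*u - u^2)) * (σ*u - u^2) ^ r)
      (Ioc 0 σ) volume := by
  have hbase : Continuous fun u : ℝ => σ * u - u ^ 2 :=
    (continuous_const.mul continuous_id).sub (continuous_pow 2)
  rw [← uIoc_of_le hσ.le, ← intervalIntegrable_iff]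
  apply IntervalIntegrable.mono_fun' (g := fun u => (CF * M) * (u ^ r * (σ - u) ^ r))
    ((beta_II hr hσ).const_mul _)
  · exact ((((hFc.mul continuous_id).mul (hH₁c.comp (Real.continuous_sqrt.comp
      hbase))).measurable).mul (hbase.measurable.pow measurable_const)).aestronglyMeasurable
  · filter_upwards [ae_restrict_mem measurableSet_uIoc] with u hu
    rw [uIoc_of_le hσ.le] at hu
    exact gg_bound hCF hM hu.1 hu.2 hσ1

lemma beta_bound {r : ℝ} (hr : -1 < r) (hr' : 0 ≤ 2*r+1)
    {σ : ℝ} (hσ : 0 < σ) (hσ1 : σ ≤ 1) :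
    ∫ u in (0:ℝ)..σ, u ^ r * (σ - u) ^ r ≤ 2/(r+1) + 2 := by
  have hr1 : (0:ℝ) < r + 1 := by linarith
  rcases le_or_gt 0 r with hcr | hcr
  · -- bounded integrand
    have h1 : ∫ u in (0:ℝ)..σ, u ^ r * (σ - u) ^ r ≤ ∫ _u in (0:ℝ)..σ, (1:ℝ) := by
      apply intervalIntegral.integral_mono_on hσ.le (beta_II hr hσ)
        intervalIntegrable_const
      intro x hx
      have hx0 := hx.1
      have hx1 : x ≤ 1 := le_trans hx.2 hσ1
      have h2 : σ - x ≤ 1 := by linarith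
      have := mul_le_one₀ (Real.rpow_le_one hx0 hx1 hcr)
        (Real.rpow_nonneg (by linarith [hx.2] : (0:ℝ) ≤ σ - x) r)
        (Real.rpow_le_one (by linarith [hx.2]) h2 hcr)
      exact this
    simp only [intervalIntegral.integral_const, smul_eq_mul, mul_one, sub_zero] at h1
    have : (0:ℝ) < 2/(r+1) := by positivity
    linarith
  · -- singular case : split at σ/2
    have hne : r ≠ 0 := by linarith
    have pow_comb : ∀ a : ℝ, 0 < a → a ^ r * ((a ^ (r+1) - 0)/(r+1)) = a ^ (2*r+1)/(r+1) := by
      intro a ha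
      have h : a ^ r * a ^ (r+1) = a ^ (2*r+1) := by
        rw [← Real.rpow_add ha]; congr 1; ring
      calc a ^ r * ((a ^ (r+1) - 0)/(r+1)) = (a ^ r * a ^ (r+1))/(r+1) := by ring
        _ = a ^ (2*r+1)/(r+1) := by rw [h]
    have hhalf : (0:ℝ) < σ/2 := by linarith
    have hint1 : IntervalIntegrable (fun u : ℝ => u ^ r * (σ - u) ^ r) volume 0 (σ/2) := by
      apply (beta_II hr hσ).mono_set'
      rw [uIoc_of_le hhalf.le, uIoc_of_le hσ.le]
      exact Ioc_subset_Ioc_right (by linarith)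
    have hint2 : IntervalIntegrable (fun u : ℝ => u ^ r * (σ - u) ^ r) volume (σ/2) σ := by
      apply (beta_II hr hσ).mono_set'
      rw [uIoc_of_le (by linarith : σ/2 ≤ σ), uIoc_of_le hσ.le]
      exact Ioc_subset_Ioc_left (by linarith)
    have e1 : ∫ u in (0:ℝ)..σ/2, u ^ r * (σ - u) ^ r ≤ 1/(r+1) := by
      have hle : ∫ u in (0:ℝ)..σ/2, u ^ r * (σ - u) ^ r
          ≤ ∫ u in (0:ℝ)..σ/2, (σ/2) ^ r * u ^ r := by
        apply intervalIntegral.integral_mono_on hhalf.le hint1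
          ((intervalIntegrable_rpow' hr).const_mul _)
        intro x hx
        rw [mul_comm ((σ/2 : ℝ) ^ r)]
        apply mul_le_mul_of_nonneg_left _ (Real.rpow_nonneg hx.1 r)
        exact Real.rpow_le_rpow_of_nonpos hhalf (by linarith [hx.2]) hcr.le
      rw [intervalIntegral.integral_const_mul, integral_rpow (Or.inl hr),
        Real.zero_rpow hr1.ne'] at hle
      rw [pow_comb _ hhalf] at hle
      have : ((σ/2 : ℝ)) ^ (2*r+1) ≤ 1 := Real.rpow_le_one hhalf.le (by linarith) hr'
      calc ∫ u in (0:ℝ)..σ/2, u ^ r * (σ - u) ^ r ≤ (σ/2) ^ (2*r+1) / (r+1) := hle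
        _ ≤ 1/(r+1) := by gcongr
    have e2 : ∫ u in (σ/2 : ℝ)..σ, u ^ r * (σ - u) ^ r ≤ 1/(r+1) := by
      have hle : ∫ u in (σ/2 : ℝ)..σ, u ^ r * (σ - u) ^ r
          ≤ ∫ u in (σ/2 : ℝ)..σ, (σ/2) ^ r * (σ - u) ^ r := by
        apply intervalIntegral.integral_mono_on (by linarith) hint2
        · apply IntervalIntegrable.const_mul
          have : IntervalIntegrable (fun u : ℝ => u ^ r) volume (σ - σ/2) (σ - σ) :=
            intervalIntegrable_rpow' hr
          simpa using this.comp_sub_left σ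
        · intro x hx
          apply mul_le_mul_of_nonneg_right _ (Real.rpow_nonneg (by linarith [hx.2]) r)
          exact Real.rpow_le_rpow_of_nonpos hhalf hx.1 hcr.le
      rw [intervalIntegral.integral_const_mul] at hle
      have hsub : ∫ u in (σ/2 : ℝ)..σ, (σ - u) ^ r = ∫ x in (σ - σ : ℝ)..(σ - σ/2), x ^ r := by
        simpa using intervalIntegral.integral_comp_sub_left (a := σ/2) (b := σ)
          (fun x : ℝ => x ^ r) σ
      rw [hsub] at hle
      have : (σ - σ : ℝ) = 0 := by ring
      rw [this] at hle
      rw [integral_rpow (Or.inl hr), Real.zero_rpow hr1.ne'] at hle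
      rw [show σ - σ/2 = σ/2 by ring, pow_comb _ hhalf] at hle
      have : ((σ/2 : ℝ)) ^ (2*r+1) ≤ 1 := Real.rpow_le_one hhalf.le (by linarith) hr'
      calc ∫ u in (σ/2 : ℝ)..σ, u ^ r * (σ - u) ^ r ≤ (σ/2) ^ (2*r+1) / (r+1) := hle
        _ ≤ 1/(r+1) := by gcongr
    have hsplit : ∫ u in (0:ℝ)..σ, u ^ r * (σ - u) ^ r
        = (∫ u in (0:ℝ)..σ/2, u ^ r * (σ - u) ^ r)
          + ∫ u in (σ/2 : ℝ)..σ, u ^ r * (σ - u) ^ r :=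
      (intervalIntegral.integral_add_adjacent_intervals hint1 hint2).symm
    rw [hsplit]
    have h2 : (2:ℝ)/(r+1) = 1/(r+1) + 1/(r+1) := by ring
    linarith

lemma key_fubini {r : ℝ} (hr : -1 < r) (hr' : 0 ≤ 2*r+1)
    {H Fc H₁ : ℝ → ℝ} (hH : ContDiff ℝ (⊤ : ℕ∞) H)
    (hH₁d : ∀ x, H₁ x = deriv H x * x + (2*r+2) * H x) (hH₁c : Continuous H₁)
    (hFc : Continuous Fc) {CF M : ℝ}
    (hCF : ∀ x, |Fc x| ≤ CF) (hM : ∀ y ∈ Icc (0:ℝ) 1, |H₁ y| ≤ M)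
    {s : ℝ} (hs : 0 < s) (hs1 : s ≤ 1) :
    (∫ σ in (0:ℝ)..s, ∫ u in (0:ℝ)..σ,
        Fc u * u * H₁ (Real.sqrt (σ*u - u^2)) * (σ*u - u^2) ^ r)
      = 2 * ∫ u in (0:ℝ)..s, Fc u * (H (Real.sqrt (s*u - u^2)) * (s*u - u^2) ^ (r+1)) := by
  classical
  have hCF0 : 0 ≤ CF := le_trans (abs_nonneg _) (hCF 0)
  have hM0 : 0 ≤ M := le_trans (abs_nonneg _) (hM 0 (by norm_num))
  set gg : ℝ × ℝ → ℝ := fun p =>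
    Fc p.2 * p.2 * H₁ (Real.sqrt (p.1*p.2 - p.2^2)) * (p.1*p.2 - p.2^2) ^ r with hggdef
  set j : ℝ × ℝ → ℝ := ({p : ℝ × ℝ | p.2 ≤ p.1}).indicator gg with hjdef
  have hbase2 : Continuous fun p : ℝ × ℝ => p.1*p.2 - p.2^2 :=
    (continuous_fst.mul continuous_snd).sub (continuous_snd.pow 2)
  have hggm : Measurable gg := by
    apply Measurable.mul
    · exact (((hFc.comp continuous_snd).mul continuous_snd).mul
        (hH₁c.comp (Real.continuous_sqrt.comp hbase2))).measurable
    · exact hbase2.measurable.pow measurable_const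
  have hjm : Measurable j :=
    hggm.indicator (measurableSet_le measurable_snd measurable_fst)
  have hslice_u : ∀ σ : ℝ, (fun u => j (σ, u)) = (Iic σ).indicator (fun u => gg (σ, u)) := by
    intro σ; funext u
    simp only [hjdef, Set.indicator_apply, Set.mem_setOf_eq, Set.mem_Iic]
  have hslice_σ : ∀ u : ℝ, (fun σ => j (σ, u)) = (Ici u).indicator (fun σ => gg (σ, u)) := by
    intro u; funext σ
    simp only [hjdef, Set.indicator_apply, Set.mem_setOf_eq, Set.mem_Ici]
  have hslice_int : ∀ σ ∈ Ioc (0:ℝ) s, IntegrableOn (fun u => gg (σ, u)) (Ioc 0 σ) volume :=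
    fun σ hσ => slice_int hr hFc hH₁c hCF hM hσ.1 (le_trans hσ.2 hs1)
  have hIntProd : Integrable j ((volume.restrict (Ioc 0 s)).prod (volume.restrict (Ioc 0 s))) := by
    have hms : AEStronglyMeasurable j
        ((volume.restrict (Ioc 0 s)).prod (volume.restrict (Ioc 0 s))) :=
      hjm.aestronglyMeasurable
    rw [MeasureTheory.integrable_prod_iff hms]
    constructor
    · filter_upwards [ae_restrict_mem measurableSet_Ioc] with σ hσ
      show Integrable (fun u => j (σ, u)) _
      rw [hslice_u σ, integrable_indicator_iff measurableSet_Iic, IntegrableOn,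
        Measure.restrict_restrict measurableSet_Iic]
      have hset : Iic σ ∩ Ioc 0 s = Ioc 0 σ := by
        ext x
        simp only [mem_inter_iff, mem_Iic, mem_Ioc]
        constructor
        · rintro ⟨h1, h2, h3⟩; exact ⟨h2, h1⟩
        · rintro ⟨h1, h2⟩; exact ⟨h2, h1, le_trans h2 hσ.2⟩
      rw [hset]
      exact hslice_int σ hσ
    · apply MeasureTheory.Integrable.mono'
        (g := fun _ => (CF*M) * (2/(r+1) + 2)) (integrable_const _)
      · exact (hms.norm).integral_prod_right'
      · filter_upwards [ae_restrict_mem measurableSet_Ioc] with σ hσ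
        have hσ1 : σ ≤ 1 := le_trans hσ.2 hs1
        have step1 : (fun u => ‖j (σ, u)‖)
            = (Iic σ).indicator (fun u => ‖gg (σ, u)‖) := by
          funext u
          rw [show j (σ, u) = (Iic σ).indicator (fun u => gg (σ, u)) u from congrFun (hslice_u σ) u]
          exact norm_indicator_eq_indicator_norm _ _
        have step2 : ∫ u in Ioc 0 s, ‖j (σ, u)‖
            = ∫ u in Ioc 0 σ, ‖gg (σ, u)‖ := by
          have hset2 : Ioc 0 s ∩ Iic σ = Ioc 0 σ := by
            ext x
            simp only [mem_inter_iff, mem_Iic, mem_Ioc]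
            constructor
            · rintro ⟨⟨h1, h2⟩, h3⟩; exact ⟨h1, h3⟩
            · rintro ⟨h1, h2⟩; exact ⟨⟨h1, le_trans h2 hσ.2⟩, h2⟩
          rw [step1, MeasureTheory.setIntegral_indicator measurableSet_Iic, hset2]
        have hbeta_int : IntegrableOn (fun u => (CF*M) * (u ^ r * (σ - u) ^ r)) (Ioc 0 σ)
            volume := by
          rw [← uIoc_of_le hσ.1.le, ← intervalIntegrable_iff]
          exact (beta_II hr hσ.1).const_mul _
        have step3 : ∫ u in Ioc 0 σ, ‖gg (σ, u)‖
            ≤ ∫ u in Ioc 0 σ, (CF*M) * (u ^ r * (σ - u) ^ r) := by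
          apply MeasureTheory.setIntegral_mono_on ((hslice_int σ hσ).norm) hbeta_int
            measurableSet_Ioc
          intro u hu
          exact gg_bound hCF hM hu.1 hu.2 hσ1
        have step4 : ∫ u in Ioc 0 σ, (CF*M) * (u ^ r * (σ - u) ^ r)
            ≤ (CF*M) * (2/(r+1) + 2) := by
          rw [MeasureTheory.integral_const_mul]
          apply mul_le_mul_of_nonneg_left _ (by positivity)
          rw [← intervalIntegral.integral_of_le hσ.1.le]
          exact beta_bound hr hr' hσ.1 hσ1
        have hnn : 0 ≤ ∫ u in Ioc 0 s, ‖j (σ, u)‖ :=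
          MeasureTheory.integral_nonneg (fun u => norm_nonneg _)
        rw [Real.norm_eq_abs, abs_of_nonneg hnn]
        calc ∫ u in Ioc 0 s, ‖j (σ, u)‖ = ∫ u in Ioc 0 σ, ‖gg (σ, u)‖ := step2
          _ ≤ ∫ u in Ioc 0 σ, (CF*M) * (u ^ r * (σ - u) ^ r) := step3
          _ ≤ (CF*M) * (2/(r+1) + 2) := step4
  have hswap : (∫ σ in Ioc 0 s, ∫ u in Ioc 0 s, j (σ, u))
      = ∫ u in Ioc 0 s, ∫ σ in Ioc 0 s, j (σ, u) :=
    MeasureTheory.integral_integral_swap hIntProd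
  rw [intervalIntegral.integral_of_le hs.le]
  have hLHS : ∀ σ ∈ Ioc (0:ℝ) s,
      (∫ u in (0:ℝ)..σ, Fc u * u * H₁ (Real.sqrt (σ*u - u^2)) * (σ*u - u^2) ^ r)
        = ∫ u in Ioc 0 s, j (σ, u) := by
    intro σ hσ
    rw [hslice_u σ, MeasureTheory.setIntegral_indicator measurableSet_Iic]
    have hset : Ioc 0 s ∩ Iic σ = Ioc 0 σ := by
      ext x
      simp only [mem_inter_iff, mem_Iic, mem_Ioc]
      constructor
      · rintro ⟨⟨h1, h2⟩, h3⟩; exact ⟨h1, h3⟩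
      · rintro ⟨h1, h2⟩; exact ⟨⟨h1, le_trans h2 hσ.2⟩, h2⟩
    rw [hset, intervalIntegral.integral_of_le hσ.1.le]
  rw [MeasureTheory.setIntegral_congr_fun measurableSet_Ioc hLHS, hswap]
  have hRHS : ∀ u ∈ Ioc (0:ℝ) s,
      (∫ σ in Ioc 0 s, j (σ, u))
        = 2 * (Fc u * (H (Real.sqrt (s*u - u^2)) * (s*u - u^2) ^ (r+1))) := by
    intro u hu
    rw [hslice_σ u, MeasureTheory.setIntegral_indicator measurableSet_Ici]
    have hset : Ioc 0 s ∩ Ici u = Icc u s := by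
      ext x
      simp only [mem_inter_iff, mem_Ici, mem_Ioc, mem_Icc]
      constructor
      · rintro ⟨⟨h1, h2⟩, h3⟩; exact ⟨h3, h2⟩
      · rintro ⟨h1, h2⟩; exact ⟨⟨lt_of_lt_of_le hu.1 h1, h2⟩, h1⟩
    rw [hset, MeasureTheory.integral_Icc_eq_integral_Ioc,
      ← intervalIntegral.integral_of_le hu.2]
    have hcongr : (∫ σ in u..s, gg (σ, u))
        = ∫ σ in u..s, Fc u * (u * H₁ (Real.sqrt (σ*u - u^2)) * (σ*u - u^2) ^ r) :=
      intervalIntegral.integral_congr (fun σ _ => by simp only [hggdef]; ring)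
    rw [hcongr, intervalIntegral.integral_const_mul,
      inner_ftc hr hH hH₁d hH₁c hM hu.1 hu.2 hs1]
    ring
  rw [MeasureTheory.setIntegral_congr_fun measurableSet_Ioc hRHS,
    intervalIntegral.integral_of_le hs.le, ← MeasureTheory.integral_const_mul]

lemma T_cont {r : ℝ} (hr : -1 < r) {Fc H₁ : ℝ → ℝ} (hFc : Continuous Fc)
    (hH₁c : Continuous H₁) {CF M : ℝ}
    (hCF : ∀ x, |Fc x| ≤ CF) (hM : ∀ y ∈ Icc (0:ℝ) 1, |H₁ y| ≤ M) :
    ContinuousOn (fun σ => ∫ u in (0:ℝ)..σ,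
      Fc u * u * H₁ (Real.sqrt (σ*u - u^2)) * (σ*u - u^2) ^ r) (Ioc 0 1) := by
  have hCF0 : 0 ≤ CF := le_trans (abs_nonneg _) (hCF 0)
  have hM0 : 0 ≤ M := le_trans (abs_nonneg _) (hM 0 (by norm_num))
  intro σ₀ hσ₀
  have hrep : ∀ σ : ℝ, (∫ u in (0:ℝ)..σ,
      Fc u * u * H₁ (Real.sqrt (σ*u - u^2)) * (σ*u - u^2) ^ r)
      = σ * ∫ t in (0:ℝ)..1, Fc (σ*t) * (σ*t) * H₁ (Real.sqrt (σ*(σ*t) - (σ*t)^2))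
          * (σ*(σ*t) - (σ*t)^2) ^ r := by
    intro σ
    have := intervalIntegral.smul_integral_comp_mul_left (a := (0:ℝ)) (b := 1)
      (fun u => Fc u * u * H₁ (Real.sqrt (σ*u - u^2)) * (σ*u - u^2) ^ r) σ
    simp only [mul_zero, mul_one, smul_eq_mul] at this
    exact this.symm
  have hcont : ContinuousWithinAt (fun σ => σ * ∫ t in (0:ℝ)..1,
      Fc (σ*t) * (σ*t) * H₁ (Real.sqrt (σ*(σ*t) - (σ*t)^2))
        * (σ*(σ*t) - (σ*t)^2) ^ r) (Ioc 0 1) σ₀ := by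
    apply ContinuousWithinAt.mul continuousWithinAt_id
    set B := (σ₀/2) ^ (2*r) + 1 with hB
    have hB0 : 0 < (σ₀/2 : ℝ) := by have := hσ₀.1; linarith
    have hBpos : 0 < B := by positivity
    have hev : ∀ᶠ σ in nhdsWithin σ₀ (Ioc 0 1), σ ∈ Ioc (0:ℝ) 1 ∧ σ₀/2 < σ := by
      filter_upwards [self_mem_nhdsWithin,
        mem_nhdsWithin_of_mem_nhds (Ioi_mem_nhds (by linarith [hσ₀.1] : σ₀/2 < σ₀))]
        with σ h1 h2
      exact ⟨h1, h2⟩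
    apply intervalIntegral.continuousWithinAt_of_dominated_interval
      (bound := fun t => (CF * M * B) * (t ^ r * (1 - t) ^ r))
    · filter_upwards [hev] with σ hσ
      have hbase : Continuous fun t : ℝ => σ*(σ*t) - (σ*t)^2 := by
        apply Continuous.sub
        · exact continuous_const.mul (continuous_const.mul continuous_id)
        · exact (continuous_const.mul continuous_id).pow 2
      exact ((((hFc.comp (continuous_const.mul continuous_id)).mul
        (continuous_const.mul continuous_id)).mul (hH₁c.comp
        (Real.continuous_sqrt.comp hbase))).measurable.mul
        (hbase.measurable.pow measurable_const)).aestronglyMeasurable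
    · filter_upwards [hev] with σ hσ
      apply ae_of_all
      intro t ht
      rw [Set.uIoc_of_le zero_le_one] at ht
      set u := σ * t with hu
      have hσpos := hσ.1.1
      have hupos : 0 < u := mul_pos hσpos ht.1
      have huσ : u ≤ σ := by
        calc u = σ * t := rfl
          _ ≤ σ * 1 := by apply mul_le_mul_of_nonneg_left ht.2 hσpos.le
          _ = σ := mul_one σ
      have h1 := gg_bound (r := r) (σ := σ) (u := u) hCF hM hupos huσ hσ.1.2
      refine le_trans h1 ?_
      have halg : u ^ r * (σ - u) ^ r = σ ^ (2*r) * (t ^ r * (1-t) ^ r) := by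
        have h2 : σ - u = σ * (1 - t) := by rw [hu]; ring
        rw [hu, h2, Real.mul_rpow hσpos.le ht.1.le,
          Real.mul_rpow hσpos.le (by linarith [ht.2] : (0:ℝ) ≤ 1 - t)]
        rw [show (2:ℝ)*r = r + r by ring, Real.rpow_add hσpos]
        ring
      rw [halg]
      have hσ2r : σ ^ (2*r) ≤ B := by
        rcases le_or_gt 0 r with hcr | hcr
        · have : σ ^ (2*r) ≤ 1 := Real.rpow_le_one hσpos.le hσ.1.2 (by linarith)
          have : (0:ℝ) < (σ₀/2) ^ (2*r) := Real.rpow_pos_of_pos hB0 _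
          rw [hB]; linarith
        · have h3 : σ ^ (2*r) ≤ (σ₀/2) ^ (2*r) :=
            Real.rpow_le_rpow_of_nonpos hB0 hσ.2.le (by linarith)
          rw [hB]; linarith
      have hnn : 0 ≤ t ^ r * (1-t) ^ r :=
        mul_nonneg (Real.rpow_nonneg ht.1.le _)
          (Real.rpow_nonneg (by linarith [ht.2] : (0:ℝ) ≤ 1 - t) _)
      calc CF * M * (σ ^ (2*r) * (t ^ r * (1-t) ^ r))
          ≤ CF * M * (B * (t ^ r * (1-t) ^ r)) := by gcongr
        _ = (CF * M * B) * (t ^ r * (1-t) ^ r) := by ring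
    · have h1 : IntervalIntegrable (fun t : ℝ => t ^ r * (1 - t) ^ r) volume 0 1 := by
        simpa using beta_II hr one_pos
      exact h1.const_mul _
    · have h1 : ∀ᵐ t : ℝ ∂(volume : Measure ℝ), t ≠ (1:ℝ) := by
        rw [MeasureTheory.ae_iff]
        have : {a : ℝ | ¬ a ≠ 1} = {(1:ℝ)} := by ext x; simp [not_not]
        rw [this]
        exact measure_singleton _
      filter_upwards [h1] with t ht1 ht
      rw [Set.uIoc_of_le zero_le_one] at ht
      have htI : t ∈ Ioo (0:ℝ) 1 := ⟨ht.1, lt_of_le_of_ne ht.2 ht1⟩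
      apply ContinuousAt.continuousWithinAt
      have hbase : Continuous fun σ : ℝ => σ*(σ*t) - (σ*t)^2 := by
        apply Continuous.sub
        · exact continuous_id.mul (continuous_id.mul continuous_const)
        · exact (continuous_id.mul continuous_const).pow 2
      have hbpos : 0 < σ₀*(σ₀*t) - (σ₀*t)^2 := by
        have h2 : σ₀*(σ₀*t) - (σ₀*t)^2 = σ₀^2 * (t * (1 - t)) := by ring
        rw [h2]
        have := hσ₀.1
        have := htI.1
        have h3 : 0 < 1 - t := by linarith [htI.2]
        positivity
      apply ContinuousAt.mul
      · apply ContinuousAt.mul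
        · apply ContinuousAt.mul
          · exact (hFc.comp (continuous_id.mul continuous_const)).continuousAt
          · exact (continuous_id.mul continuous_const).continuousAt
        · exact (hH₁c.comp (Real.continuous_sqrt.comp hbase)).continuousAt
      · exact hbase.continuousAt.rpow_const (Or.inl hbpos.ne')
  exact (hcont.congr (fun σ _ => hrep σ) (hrep σ₀))

/-- Differentiation under the integral in the induction step of Theorem 2.7:
with `H₁(x) = H'(x) x + (n-1) H(x)` one has `H₁(0) ≠ 0`, and differentiating
the vanishing integral of `F(u) H((su-u²)^{1/2})(su-u²)^{(n-1)/2}` in `s`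
gives the vanishing of `∫₀ˢ F(u) u H₁((su-u²)^{1/2})(su-u²)^{(n-3)/2} du`. -/
theorem diff_under_integral_step (n : ℕ) (hn : 2 ≤ n) (H : ℝ → ℝ) (hH : ContDiff ℝ (⊤ : ℕ∞) H)
    (hH0 : H 0 ≠ 0) (F : ℝ → ℝ) (hF : ContinuousOn F (Icc 0 1))
    (H₁ : ℝ → ℝ) (hH₁ : H₁ = fun x => deriv H x * x + ((n : ℝ) - 1) * H x)
    (heq : ∀ s ∈ Icc (0:ℝ) 1, ∫ u in (0:ℝ)..s,
      F u * H (Real.sqrt (s * u - u ^ 2)) * (s * u - u ^ 2) ^ (((n : ℝ) - 1) / 2) = 0) :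
    H₁ 0 ≠ 0 ∧ ∀ s ∈ Ioc (0:ℝ) 1, ∫ u in (0:ℝ)..s,
      F u * u * H₁ (Real.sqrt (s * u - u ^ 2)) * (s * u - u ^ 2) ^ (((n : ℝ) - 3) / 2) = 0 := by
  have hn2 : (2:ℝ) ≤ (n:ℝ) := by exact_mod_cast hn
  set r : ℝ := ((n:ℝ) - 3)/2 with hrdef
  have hr : -1 < r := by rw [hrdef]; linarith
  have hr' : 0 ≤ 2*r + 1 := by rw [hrdef]; linarith
  have hrn1 : ((n:ℝ) - 1)/2 = r + 1 := by rw [hrdef]; ring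
  have hH₁d : ∀ x, H₁ x = deriv H x * x + (2*r+2) * H x := by
    intro x
    rw [hH₁, hrdef]
    ring_nf
  have hH₁c : Continuous H₁ := by
    rw [hH₁]
    exact ((hH.continuous_deriv (by simp)).mul continuous_id).add
      (continuous_const.mul hH.continuous)
  constructor
  · rw [hH₁]
    have h2 : deriv H 0 * 0 + ((n:ℝ) - 1) * H 0 = ((n:ℝ)-1) * H 0 := by ring
    simp only [h2]
    exact mul_ne_zero (by linarith) hH0
  · -- continuous bounded extension of F
    set Fc : ℝ → ℝ := fun x => F (max 0 (min 1 x)) with hFcdef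
    have hmemcl : ∀ x : ℝ, max 0 (min 1 x) ∈ Icc (0:ℝ) 1 :=
      fun x => ⟨le_max_left _ _, max_le (by norm_num) (min_le_left _ _)⟩
    have hFc : Continuous Fc := by
      apply hF.comp_continuous
        (continuous_const.max (continuous_const.min continuous_id)) hmemcl
    have hFcF : ∀ x ∈ Icc (0:ℝ) 1, Fc x = F x := by
      intro x hx
      rw [hFcdef]
      simp only
      rw [min_eq_right hx.2, max_eq_right hx.1]
    obtain ⟨CF, hCF'⟩ := isCompact_Icc.exists_bound_of_continuousOn hF
    have hCF : ∀ x, |Fc x| ≤ CF := fun x => hCF' _ (hmemcl x)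
    obtain ⟨M, hM⟩ := isCompact_Icc.exists_bound_of_continuousOn
      (hH₁c.continuousOn (s := Icc (0:ℝ) 1))
    have heq2 : ∀ s ∈ Icc (0:ℝ) 1, (∫ u in (0:ℝ)..s,
        Fc u * (H (Real.sqrt (s*u - u^2)) * (s*u - u^2) ^ (r+1))) = 0 := by
      intro s hs
      refine Eq.trans ?_ (heq s hs)
      apply intervalIntegral.integral_congr
      intro u hu
      rw [uIcc_of_le hs.1] at hu
      have h5 := hFcF u ⟨hu.1, le_trans hu.2 hs.2⟩
      simp only [h5, ← hrn1]
      ring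
    set T : ℝ → ℝ := fun σ => ∫ u in (0:ℝ)..σ,
      Fc u * u * H₁ (Real.sqrt (σ*u - u^2)) * (σ*u - u^2) ^ r with hTdef
    have hTc : ContinuousOn T (Ioc 0 1) := T_cont hr hFc hH₁c hCF hM
    have hΦ : ∀ s' ∈ Icc (0:ℝ) 1, (∫ σ in (0:ℝ)..s', T σ) = 0 := by
      intro s' hs'
      rcases eq_or_lt_of_le hs'.1 with h0 | h0
      · rw [← h0]; simp
      · have : (∫ σ in (0:ℝ)..s', T σ) = ∫ σ in (0:ℝ)..s', ∫ u in (0:ℝ)..σ,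
            Fc u * u * H₁ (Real.sqrt (σ*u - u^2)) * (σ*u - u^2) ^ r := rfl
        rw [this, key_fubini hr hr' hH hH₁d hH₁c hFc hCF hM h0 hs'.2,
          heq2 s' hs', mul_zero]
    intro s hs
    -- convert the goal into `T s = 0`
    have hgoal : (∫ u in (0:ℝ)..s,
        F u * u * H₁ (Real.sqrt (s*u - u^2)) * (s*u - u^2) ^ r) = T s := by
      apply intervalIntegral.integral_congr
      intro u hu
      rw [uIcc_of_le hs.1.le] at hu
      have h5 := hFcF u ⟨hu.1, le_trans hu.2 hs.2⟩
      simp only [h5]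
    have hmemIoc : Ioc (0:ℝ) s ∈ nhdsWithin s (Iic s) := by
      apply mem_nhdsWithin.mpr
      exact ⟨Ioi 0, isOpen_Ioi, hs.1, fun x hx => ⟨hx.1, hx.2⟩⟩
    -- interval integrability of T on 0..s
    have hTaesm : AEStronglyMeasurable T (volume.restrict (Ioc 0 s)) :=
      (hTc.mono (Ioc_subset_Ioc_right hs.2)).aestronglyMeasurable measurableSet_Ioc
    have hTbdd : ∀ σ ∈ Ioc (0:ℝ) s, ‖T σ‖ ≤ (CF*M) * (2/(r+1) + 2) := by
      intro σ hσ
      have hσ1 : σ ≤ 1 := le_trans hσ.2 hs.2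
      have hb : ∀ᵐ u ∂volume.restrict (Set.uIoc 0 σ),
          ‖Fc u * u * H₁ (Real.sqrt (σ*u - u^2)) * (σ*u - u^2) ^ r‖
            ≤ (CF*M) * (u ^ r * (σ - u) ^ r) := by
        filter_upwards [ae_restrict_mem measurableSet_uIoc] with u hu
        rw [Set.uIoc_of_le hσ.1.le] at hu
        exact gg_bound hCF hM hu.1 hu.2 hσ1
      have hgint : IntervalIntegrable (fun u => (CF*M) * (u ^ r * (σ - u) ^ r))
          volume 0 σ := (beta_II hr hσ.1).const_mul _
      have h1 := intervalIntegral.norm_integral_le_abs_of_norm_le hb hgint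
      have hCF0 : 0 ≤ CF := le_trans (abs_nonneg _) (hCF 0)
      have hM0 : 0 ≤ M := le_trans (abs_nonneg _) (hM 0 (by norm_num))
      have hnn : 0 ≤ ∫ u in (0:ℝ)..σ, (CF*M) * (u ^ r * (σ - u) ^ r) := by
        apply intervalIntegral.integral_nonneg hσ.1.le
        intro u hu
        have h3 : 0 ≤ u ^ r := Real.rpow_nonneg hu.1 r
        have h4 : 0 ≤ (σ - u) ^ r := Real.rpow_nonneg (by linarith [hu.2] : (0:ℝ) ≤ σ - u) r
        positivity
      rw [abs_of_nonneg hnn] at h1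
      refine le_trans h1 ?_
      rw [intervalIntegral.integral_const_mul]
      exact mul_le_mul_of_nonneg_left (beta_bound hr hr' hσ.1 hσ1) (by positivity)
    have hTint : IntervalIntegrable T volume 0 s := by
      rw [intervalIntegrable_iff, Set.uIoc_of_le hs.1.le]
      apply MeasureTheory.Integrable.mono'
        (g := fun _ => (CF*M) * (2/(r+1) + 2)) (integrable_const _) hTaesm
      filter_upwards [ae_restrict_mem measurableSet_Ioc] with σ hσ
      exact hTbdd σ hσ
    have hmeasAt : StronglyMeasurableAtFilter T (nhdsWithin s (Iic s)) volume :=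
      ⟨Ioc 0 s, hmemIoc, hTaesm⟩
    have hcontW : ContinuousWithinAt T (Iic s) s := by
      have h1 : ContinuousWithinAt T (Ioc 0 s) s :=
        (hTc s hs).mono (Ioc_subset_Ioc_right hs.2)
      exact h1.mono_of_mem_nhdsWithin hmemIoc
    have hFTC : HasDerivWithinAt (fun x => ∫ σ in (0:ℝ)..x, T σ) (T s) (Iic s) s :=
      intervalIntegral.integral_hasDerivWithinAt_right hTint hmeasAt hcontW
    have h1 : HasDerivWithinAt (fun x => ∫ σ in (0:ℝ)..x, T σ) (T s) (Icc 0 s) s :=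
      hFTC.mono Icc_subset_Iic_self
    have h2 : HasDerivWithinAt (fun x => ∫ σ in (0:ℝ)..x, T σ) 0 (Icc 0 s) s := by
      apply HasDerivWithinAt.congr (hasDerivWithinAt_const s (Icc 0 s) 0)
      · intro y hy
        exact hΦ y ⟨hy.1, le_trans hy.2 hs.2⟩
      · exact hΦ s ⟨hs.1.le, hs.2⟩
    have hud : UniqueDiffWithinAt ℝ (Icc (0:ℝ) s) s :=
      (uniqueDiffOn_Icc hs.1) s ⟨hs.1.le, le_refl s⟩
    have hT0 : T s = 0 := by
      have e1 := h1.derivWithin hud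
      have e2 := h2.derivWithin hud
      rw [← e1, e2]
    rw [hgoal, hT0]
end

section
/- Let $F : [0,1] \to \mathbb{R}$ be continuous and suppose that for all $r$ with $0 < 2r \leq 1$, $\int_0^{2r} F(u)\,u^{-2}\,J\big((2ur-u^2)^{1/2}\,c\big)\,du = 0$, where $c \geq 0$ is fixed, $J(x) = \int_{S_{n-2}} e^{-ix\omega_1}\,d\omega'$ is (up to normalization) a Bessel-type kernel with $J(0) \neq 0$, and $F(u)/u^2$ is continuous down to $u=0$ (i.e., $F(u) = O(u^2)$ near $0$ and $F/u^2$ extends continuously). Then $F \equiv 0$ on $[0,1]$. -/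
open MeasureTheory Set intervalIntegral

lemma J_props (m : ℕ) (hm : 1 ≤ m) (J : ℝ → ℝ)
    (hJ : ∀ x : ℝ, (J x : ℂ) =
      ∫ ω : Metric.sphere (0 : EuclideanSpace ℝ (Fin m)) 1,
        Complex.exp (-Complex.I * x * ((ω : EuclideanSpace ℝ (Fin m)) ⟨0, by omega⟩))
        ∂(volume : Measure (EuclideanSpace ℝ (Fin m))).toSphere) :
    ∃ σ : ℝ, 0 ≤ σ ∧ (∀ x, HasDerivAt J (deriv J x) x) ∧
      (∀ x, |deriv J x| ≤ σ * |x|) := by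
  set E := EuclideanSpace ℝ (Fin m) with hE
  set μ := (volume : Measure E).toSphere with hμ
  set i0 : Fin m := ⟨0, by omega⟩ with hi0
  set f : Metric.sphere (0 : E) 1 → ℝ := fun ω => (ω : E) i0 with hfdef
  have hfc : Continuous f := (EuclideanSpace.proj i0).continuous.comp continuous_subtype_val
  have hfb : ∀ ω, |f ω| ≤ 1 := by
    intro ω
    have h1 : ‖(ω : E)‖ = 1 := by simpa [mem_sphere_iff_norm] using ω.2
    rw [← h1, EuclideanSpace.norm_eq, ← Real.sqrt_sq_eq_abs]
    apply Real.sqrt_le_sqrt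
    refine Finset.single_le_sum (f := fun i => ‖(ω:E) i‖^2) (fun i _ => by positivity)
      (Finset.mem_univ i0) |>.trans_eq' ?_
    simp [Real.norm_eq_abs, sq_abs, hfdef]
  have hrw : ∀ (x : ℝ) (ω : Metric.sphere (0:E) 1),
      -Complex.I * x * (f ω : ℝ) = ((-(x * f ω) : ℝ) : ℂ) * Complex.I := by
    intro x ω; push_cast; ring
  -- J as a real cosine integral
  have hcos : ∀ x : ℝ, J x = ∫ ω, Real.cos (x * f ω) ∂μ := by
    intro x
    have hint : Integrable (fun ω => Complex.exp (-Complex.I * x * (f ω : ℝ))) μ := by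
      refine (integrable_const (1:ℝ)).mono' ?_ ?_
      · exact (Complex.continuous_exp.comp (by continuity)).aestronglyMeasurable
      · refine Filter.Eventually.of_forall fun ω => ?_
        rw [show Complex.exp (-Complex.I * x * (f ω : ℝ))
            = Complex.exp (((-(x * f ω) : ℝ) : ℂ) * Complex.I) from by rw [hrw x ω],
          Complex.norm_exp_ofReal_mul_I]
    have hre := congrArg Complex.re (hJ x)
    rw [Complex.ofReal_re] at hre
    rw [hre, ← RCLike.re_eq_complex_re, ← integral_re hint]
    congr 1
    funext ω
    rw [RCLike.re_eq_complex_re, hrw x ω, Complex.exp_ofReal_mul_I_re, Real.cos_neg]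
  -- derivative
  refine ⟨(μ univ).toReal, ENNReal.toReal_nonneg, ?_⟩
  have key : ∀ x₀ : ℝ, HasDerivAt J (∫ ω, -Real.sin (x₀ * f ω) * f ω ∂μ) x₀ := by
    intro x₀
    have h := hasDerivAt_integral_of_dominated_loc_of_deriv_le (μ := μ)
      (F := fun x ω => Real.cos (x * f ω)) (F' := fun x ω => -Real.sin (x * f ω) * f ω)
      (x₀ := x₀) (bound := fun _ => 1) (Metric.ball_mem_nhds x₀ one_pos)
      (Filter.Eventually.of_forall fun x =>
        ((Real.continuous_cos.comp ((continuous_const.mul hfc)))).aestronglyMeasurable)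
      ((integrable_const (1:ℝ)).mono'
        ((Real.continuous_cos.comp (continuous_const.mul hfc))).aestronglyMeasurable
        (Filter.Eventually.of_forall fun ω => by
          simp only [Real.norm_eq_abs, Function.comp]; exact Real.abs_cos_le_one _))
      (((Real.continuous_sin.comp (continuous_const.mul hfc)).neg.mul hfc).aestronglyMeasurable)
      (Filter.Eventually.of_forall fun ω => fun x _ => by
        calc ‖-Real.sin (x * f ω) * f ω‖ = |Real.sin (x * f ω)| * |f ω| := by
              rw [Real.norm_eq_abs, abs_mul, abs_neg]
          _ ≤ 1 * 1 := mul_le_mul (Real.abs_sin_le_one _) (hfb ω) (abs_nonneg _) zero_le_one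
          _ = 1 := by ring)
      (integrable_const 1)
      (Filter.Eventually.of_forall fun ω => fun x _ => by
        have := (Real.hasDerivAt_cos (x * f ω)).comp x ((hasDerivAt_id x).mul_const (f ω))
        simp only [id] at this
        refine this.congr_deriv ?_
        ring)
    have hJeq : J = fun x => ∫ ω, Real.cos (x * f ω) ∂μ := funext hcos
    rw [hJeq]
    exact h.2
  constructor
  · intro x
    rw [(key x).deriv]; exact key x
  · intro x
    rw [(key x).deriv]
    calc ‖∫ ω, -Real.sin (x * f ω) * f ω ∂μ‖ ≤ ∫ _ω, |x| ∂μ := by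
          refine norm_integral_le_of_norm_le (integrable_const _) ?_
          refine Filter.Eventually.of_forall fun ω => ?_
          calc ‖-Real.sin (x * f ω) * f ω‖ = |Real.sin (x * f ω)| * |f ω| := by
                rw [Real.norm_eq_abs, abs_mul, abs_neg]
            _ ≤ |x * f ω| * 1 := mul_le_mul (Real.abs_sin_le_abs) (hfb ω)
                (abs_nonneg _) (abs_nonneg _)
            _ = |x| * |f ω| := by rw [abs_mul]; ring
            _ ≤ |x| * 1 := by
                exact mul_le_mul_of_nonneg_left (hfb ω) (abs_nonneg _)
            _ = |x| := mul_one _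
      _ = (μ univ).toReal * |x| := by rw [MeasureTheory.integral_const, smul_eq_mul]; rfl


lemma volterra_zero (J J' : ℝ → ℝ) (hJd : ∀ x, HasDerivAt J (J' x) x)
    (hJ'm : Measurable J') (σ : ℝ) (hσ : 0 ≤ σ) (hJ'b : ∀ x, |J' x| ≤ σ * |x|)
    (hJ0 : J 0 ≠ 0) (c : ℝ) (hc : 0 ≤ c) (G : ℝ → ℝ) (hG : Continuous G)
    (hint : ∀ s : ℝ, 0 < s → s ≤ 1 →
      (∫ u in (0:ℝ)..s, G u * J (Real.sqrt (u * s - u ^ 2) * c)) = 0) :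
    EqOn G 0 (Icc 0 1) := by
  have hJcont : Continuous J := by
    rw [continuous_iff_continuousAt]; exact fun x => (hJd x).continuousAt
  set Ψ : ℝ → ℝ := fun s => ∫ u in (0:ℝ)..s, G u with hΨdef
  have hΨd : ∀ x : ℝ, HasDerivAt Ψ (G x) x := fun x =>
    intervalIntegral.integral_hasDerivAt_right (hG.intervalIntegrable 0 x)
      hG.stronglyMeasurable.stronglyMeasurableAtFilter hG.continuousAt
  have hΨc : Continuous Ψ := by
    rw [continuous_iff_continuousAt]; exact fun x => (hΨd x).continuousAt
  have hΨ0 : Ψ 0 = 0 := intervalIntegral.integral_same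
  obtain ⟨M, hM⟩ := isCompact_Icc.exists_bound_of_continuousOn
    (f := Ψ) (hΨc.continuousOn (s := Icc (0:ℝ) 1))
  have hM0 : 0 ≤ M := le_trans (by simp [hΨ0]) (hM 0 (by norm_num))
  have habsJ0 : 0 < |J 0| := abs_pos.mpr hJ0
  set A : ℝ := σ * c ^ 2 / 2 / |J 0| with hAdef
  have hA : 0 ≤ A := by positivity
  -- central bound on the kernel derivative factor
  have hker : ∀ s : ℝ, s ≤ 1 → ∀ u ∈ Icc (0:ℝ) s,
      |J' (Real.sqrt (u * s - u ^ 2) * c) *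
        ((s - 2 * u) / (2 * Real.sqrt (u * s - u ^ 2)) * c)| ≤ σ * c ^ 2 / 2 := by
    intro s hs1 u hu
    set q := u * s - u ^ 2 with hq
    rcases eq_or_lt_of_le (Real.sqrt_nonneg q) with h0 | h0
    · rw [← h0]
      simp [div_eq_mul_inv]
      positivity
    · have hsu : |s - 2 * u| ≤ 1 := by
        rw [abs_le]; constructor <;> [skip; skip] <;>
          (obtain ⟨h1, h2⟩ := hu; nlinarith)
      calc |J' (Real.sqrt q * c) * ((s - 2 * u) / (2 * Real.sqrt q) * c)|
          = |J' (Real.sqrt q * c)| * (|s - 2 * u| / (2 * Real.sqrt q) * c) := by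
            rw [abs_mul]; congr 1
            rw [abs_mul, abs_div, abs_of_nonneg hc, abs_of_nonneg (by positivity : (0:ℝ) ≤ 2 * Real.sqrt q)]
        _ ≤ (σ * (Real.sqrt q * c)) * (|s - 2 * u| / (2 * Real.sqrt q) * c) := by
            apply mul_le_mul_of_nonneg_right _ (by positivity)
            calc |J' (Real.sqrt q * c)| ≤ σ * |Real.sqrt q * c| := hJ'b _
              _ = σ * (Real.sqrt q * c) := by
                  rw [abs_of_nonneg (by positivity)]
        _ = σ * c ^ 2 * |s - 2 * u| / 2 := by
            field_simp
        _ ≤ σ * c ^ 2 * 1 / 2 := by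
            apply div_le_div_of_nonneg_right _ (by norm_num)
            exact mul_le_mul_of_nonneg_left hsu (by positivity)
        _ = σ * c ^ 2 / 2 := by ring
  -- key integral inequality
  have hkey : ∀ s : ℝ, 0 < s → s ≤ 1 →
      |Ψ s| * |J 0| ≤ ∫ u in (0:ℝ)..s, σ * c ^ 2 / 2 * |Ψ u| := by
    intro s hs0 hs1
    set g : ℝ → ℝ := fun u => Real.sqrt (u * s - u ^ 2) * c with hgdef
    have hqc : Continuous fun u : ℝ => u * s - u ^ 2 :=
      (continuous_id.mul continuous_const).sub (continuous_pow 2)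
    have hgc : Continuous g := (Real.continuous_sqrt.comp hqc).mul continuous_const
    set K : ℝ → ℝ := fun u => J (g u) with hKdef
    have hKc : Continuous K := hJcont.comp
      hgc
    set K' : ℝ → ℝ := fun u =>
      J' (g u) * ((s - 2 * u) / (2 * Real.sqrt (u * s - u ^ 2)) * c) with hK'def
    set t2 : ℝ → ℝ := fun u => Ψ u * K' u with ht2def
    have hderiv : ∀ u ∈ Ioo (0:ℝ) s,
        HasDerivAt (fun u => Ψ u * K u) (G u * K u + t2 u) u := by
      intro u hu
      have hqpos : 0 < u * s - u ^ 2 := by nlinarith [hu.1, hu.2]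
      have hq : HasDerivAt (fun u : ℝ => u * s - u ^ 2) (s - 2 * u) u := by
        have := ((hasDerivAt_id u).mul_const s).sub (hasDerivAt_pow 2 u)
        refine this.congr_deriv ?_
        simp
      have hsq := (Real.hasDerivAt_sqrt (ne_of_gt hqpos)).comp u hq
      have hg : HasDerivAt g ((s - 2 * u) / (2 * Real.sqrt (u * s - u ^ 2)) * c) u := by
        have := hsq.mul_const c
        refine this.congr_deriv ?_
        field_simp
      have hK : HasDerivAt K (K' u) u := (hJd (g u)).comp u hg
      exact (hΨd u).mul hK
    have hcont : ContinuousOn (fun u => Ψ u * K u) (Icc 0 s) := (hΨc.mul hKc).continuousOn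
    have ht1int : IntervalIntegrable (fun u => G u * K u) volume 0 s :=
      (hG.mul hKc).intervalIntegrable 0 s
    have ht2meas : Measurable t2 := by
      apply hΨc.measurable.mul
      apply (hJ'm.comp hgc.measurable).mul
      apply Measurable.mul _ measurable_const
      exact (measurable_const.sub (measurable_const.mul measurable_id)).div
        (measurable_const.mul (Real.continuous_sqrt.comp hqc).measurable)
    have ht2bd : ∀ u ∈ Ioc (0:ℝ) s, ‖t2 u‖ ≤ M * (σ * c ^ 2 / 2) := by
      intro u hu
      have hu' : u ∈ Icc (0:ℝ) s := ⟨le_of_lt hu.1, hu.2⟩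
      have h1 : |Ψ u| ≤ M := hM u ⟨hu'.1, le_trans hu'.2 hs1⟩
      have h2 := hker s hs1 u hu'
      calc ‖t2 u‖ = |Ψ u| * |K' u| := abs_mul _ _
        _ ≤ M * (σ * c ^ 2 / 2) := mul_le_mul h1 h2 (abs_nonneg _) hM0
    have ht2int : IntervalIntegrable t2 volume 0 s := by
      rw [intervalIntegrable_iff_integrableOn_Ioc_of_le (le_of_lt hs0)]
      refine (integrable_const (M * (σ * c ^ 2 / 2))).mono'
        ht2meas.aestronglyMeasurable.restrict ?_
      rw [ae_restrict_iff' measurableSet_Ioc]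
      exact Filter.Eventually.of_forall ht2bd
    have hFTC := intervalIntegral.integral_eq_sub_of_hasDerivAt_of_le (le_of_lt hs0)
      hcont hderiv ((ht1int.add ht2int))
    rw [intervalIntegral.integral_add ht1int ht2int] at hFTC
    have hgs : g s = 0 := by
      simp only [hgdef]
      rw [show s * s - s ^ 2 = 0 by ring, Real.sqrt_zero, zero_mul]
    have hint0 : (∫ u in (0:ℝ)..s, G u * K u) = 0 := hint s hs0 hs1
    rw [hint0, zero_add, hΨ0, zero_mul] at hFTC
    have hΨs : Ψ s * J 0 = ∫ u in (0:ℝ)..s, t2 u := by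
      rw [hFTC, hKdef]
      simp only [hgs, sub_zero]
    have hb : |∫ u in (0:ℝ)..s, t2 u| ≤ |(∫ u in (0:ℝ)..s, σ * c ^ 2 / 2 * |Ψ u|)| := by
      have hae : ∀ᵐ t ∂volume.restrict (Set.uIoc (0:ℝ) s), ‖t2 t‖ ≤ σ * c ^ 2 / 2 * |Ψ t| := by
        rw [uIoc_of_le (le_of_lt hs0), ae_restrict_iff' measurableSet_Ioc]
        refine Filter.Eventually.of_forall fun u hu => ?_
        have h2 := hker s hs1 u ⟨le_of_lt hu.1, hu.2⟩
        calc ‖t2 u‖ = |Ψ u| * |K' u| := abs_mul _ _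
          _ ≤ |Ψ u| * (σ * c ^ 2 / 2) := mul_le_mul_of_nonneg_left h2 (abs_nonneg _)
          _ = σ * c ^ 2 / 2 * |Ψ u| := by ring
      have := intervalIntegral.norm_integral_le_of_norm_le (f := t2)
        (g := fun u => σ * c ^ 2 / 2 * |Ψ u|) (a := (0:ℝ)) (b := s) (le_of_lt hs0)
        ((ae_restrict_iff' measurableSet_Ioc).mp (by rwa [uIoc_of_le (le_of_lt hs0)] at hae))
        ((continuous_const.mul hΨc.abs).intervalIntegrable 0 s)
      exact this.trans (le_abs_self _)
    have hnn : 0 ≤ ∫ u in (0:ℝ)..s, σ * c ^ 2 / 2 * |Ψ u| := by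
      apply intervalIntegral.integral_nonneg (le_of_lt hs0)
      intro u _; positivity
    calc |Ψ s| * |J 0| = |Ψ s * J 0| := (abs_mul _ _).symm
      _ = |∫ u in (0:ℝ)..s, t2 u| := by rw [hΨs]
      _ ≤ |(∫ u in (0:ℝ)..s, σ * c ^ 2 / 2 * |Ψ u|)| := hb
      _ = _ := abs_of_nonneg hnn
  -- Gronwall-type iteration
  have hkey' : ∀ s : ℝ, 0 < s → s ≤ 1 → |Ψ s| ≤ A * ∫ u in (0:ℝ)..s, |Ψ u| := by
    intro s hs0 hs1
    have h := hkey s hs0 hs1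
    rw [intervalIntegral.integral_const_mul] at h
    rw [hAdef, div_mul_eq_mul_div, div_mul_eq_mul_div, le_div_iff₀ habsJ0]
    linarith
  have hind : ∀ k : ℕ, ∀ s ∈ Icc (0:ℝ) 1, |Ψ s| ≤ M * A ^ k * s ^ k / k.factorial := by
    intro k
    induction k with
    | zero => intro s hs; simpa using hM s hs
    | succ k ih =>
      intro s hs
      rcases eq_or_lt_of_le hs.1 with h0 | h0
      · rw [← h0]
        simp [hΨ0]
      · have h1 := hkey' s h0 hs.2
        have h2 : (∫ u in (0:ℝ)..s, |Ψ u|) ≤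
            ∫ u in (0:ℝ)..s, M * A ^ k * u ^ k / k.factorial := by
          apply intervalIntegral.integral_mono_on (le_of_lt h0)
            (hΨc.abs.intervalIntegrable 0 s)
            (((continuous_const.mul (continuous_pow k)).div_const _).intervalIntegrable 0 s)
          intro u hu
          exact ih u ⟨hu.1, le_trans hu.2 hs.2⟩
        have h3 : (∫ u in (0:ℝ)..s, M * A ^ k * u ^ k / k.factorial)
            = M * A ^ k / k.factorial * (s ^ (k + 1) / (k + 1)) := by
          rw [show (fun u : ℝ => M * A ^ k * u ^ k / k.factorial)
              = fun u : ℝ => M * A ^ k / k.factorial * u ^ k from by funext u; ring]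
          rw [intervalIntegral.integral_const_mul, integral_pow]
          norm_num
        calc |Ψ s| ≤ A * ∫ u in (0:ℝ)..s, |Ψ u| := h1
          _ ≤ A * (M * A ^ k / k.factorial * (s ^ (k + 1) / (k + 1))) := by
              rw [← h3]; exact mul_le_mul_of_nonneg_left h2 hA
          _ = M * A ^ (k + 1) * s ^ (k + 1) / (k + 1).factorial := by
              rw [Nat.factorial_succ]
              have hk : (k.factorial : ℝ) ≠ 0 := Nat.cast_ne_zero.mpr k.factorial_ne_zero
              have hk1 : ((k:ℝ) + 1) ≠ 0 := by positivity
              push_cast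
              field_simp
              ring
  have hΨzero : ∀ s ∈ Icc (0:ℝ) 1, Ψ s = 0 := by
    intro s hs
    have hb : ∀ k : ℕ, |Ψ s| ≤ M * (A ^ k / k.factorial) := by
      intro k
      refine le_trans (hind k s hs) ?_
      rw [mul_div_assoc, mul_assoc]
      apply mul_le_mul_of_nonneg_left _ hM0
      rw [div_eq_mul_inv, div_eq_mul_inv]
      apply mul_le_mul_of_nonneg_left _ (by positivity)
      calc s ^ k * ((k.factorial : ℝ))⁻¹ ≤ 1 * ((k.factorial : ℝ))⁻¹ :=
            mul_le_mul_of_nonneg_right (pow_le_one₀ hs.1 hs.2) (by positivity)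
        _ = _ := one_mul _
    have htend : Filter.Tendsto (fun k : ℕ => M * (A ^ k / k.factorial))
        Filter.atTop (nhds 0) := by
      have := (FloorSemiring.tendsto_pow_div_factorial_atTop A).const_mul M
      simpa using this
    have := ge_of_tendsto' htend hb
    have habs : |Ψ s| ≤ 0 := this
    exact abs_eq_zero.mp (le_antisymm habs (abs_nonneg _))
  -- conclude G = 0 on Icc 0 1
  have hGIoo : EqOn G 0 (Ioo 0 1) := by
    intro t ht
    have hev : Ψ =ᶠ[nhds t] fun _ => (0:ℝ) := by
      filter_upwards [Ioo_mem_nhds ht.1 ht.2] with x hx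
      exact hΨzero x ⟨le_of_lt hx.1, le_of_lt hx.2⟩
    have h0 : HasDerivAt Ψ 0 t := (hasDerivAt_const t (0:ℝ)).congr_of_eventuallyEq hev
    have := (hΨd t).unique h0
    simpa using this
  have := hGIoo.closure hG continuous_const
  rwa [closure_Ioo (by norm_num : (0:ℝ) ≠ 1)] at this


/-- The `n = 3` step of the support theorem: if the integrals of
`F(u) u⁻² J((2ur - u²)^{1/2} c)` over `[0, 2r]` vanish for all `0 < 2r ≤ 1`, where
`J` is the spherical (Bessel-type) kernel with `J(0) ≠ 0` and `F(u)/u²` extends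
continuously to `u = 0`, then `F ≡ 0` on `[0,1]`. -/
theorem support_step_n3 (n : ℕ) (hn : 3 ≤ n) (c : ℝ) (hc : 0 ≤ c) (J : ℝ → ℝ)
    (hJ : ∀ x : ℝ, (J x : ℂ) =
      ∫ ω : Metric.sphere (0 : EuclideanSpace ℝ (Fin (n - 1))) 1,
        Complex.exp (-Complex.I * x * ((ω : EuclideanSpace ℝ (Fin (n - 1))) ⟨0, by omega⟩))
        ∂(volume : Measure (EuclideanSpace ℝ (Fin (n - 1)))).toSphere)
    (hJ0 : J 0 ≠ 0)
    (F : ℝ → ℝ) (hF : ContinuousOn F (Icc 0 1))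
    (hext : ∃ G : ℝ → ℝ, ContinuousOn G (Icc 0 1) ∧ ∀ u ∈ Ioc (0:ℝ) 1, G u = F u / u ^ 2)
    (heq : ∀ r : ℝ, 0 < 2 * r → 2 * r ≤ 1 →
      ∫ u in (0:ℝ)..(2 * r), F u * u⁻¹ ^ 2 * J (Real.sqrt (2 * u * r - u ^ 2) * c) = 0) :
    EqOn F 0 (Icc 0 1) := by
  obtain ⟨G, hGc, hGF⟩ := hext
  obtain ⟨σ, hσ, hJd, hJ'b⟩ := J_props (n - 1) (by omega) J hJ
  set Gt : ℝ → ℝ := IccExtend zero_le_one ((Icc (0:ℝ) 1).restrict G) with hGtdef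
  have hGtc : Continuous Gt := Continuous.Icc_extend' hGc.restrict
  have hGeq : ∀ u ∈ Icc (0:ℝ) 1, Gt u = G u := fun u hu => by
    rw [hGtdef, IccExtend_of_mem _ _ hu]; rfl
  have hint : ∀ s : ℝ, 0 < s → s ≤ 1 →
      (∫ u in (0:ℝ)..s, Gt u * J (Real.sqrt (u * s - u ^ 2) * c)) = 0 := by
    intro s hs0 hs1
    have h2s : 2 * (s / 2) = s := by ring
    have h := heq (s / 2) (by rw [h2s]; exact hs0) (by rw [h2s]; exact hs1)
    rw [h2s] at h
    refine Eq.trans ?_ h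
    apply intervalIntegral.integral_congr_ae
    refine Filter.Eventually.of_forall fun u hu => ?_
    rw [uIoc_of_le (le_of_lt hs0)] at hu
    have hu1 : u ∈ Ioc (0:ℝ) 1 := ⟨hu.1, hu.2.trans hs1⟩
    have hune : u ≠ 0 := ne_of_gt hu.1
    rw [hGeq u ⟨le_of_lt hu.1, hu1.2⟩, hGF u hu1,
      show 2 * u * (s / 2) - u ^ 2 = u * s - u ^ 2 by ring]
    field_simp
  have hG0 : EqOn Gt 0 (Icc 0 1) :=
    volterra_zero J (deriv J) hJd (measurable_deriv J) σ hσ hJ'b hJ0 c hc Gt hGtc hint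
  -- conclude for F
  set Ft : ℝ → ℝ := IccExtend zero_le_one ((Icc (0:ℝ) 1).restrict F) with hFtdef
  have hFtc : Continuous Ft := Continuous.Icc_extend' hF.restrict
  have hFeq : ∀ u ∈ Icc (0:ℝ) 1, Ft u = F u := fun u hu => by
    rw [hFtdef, IccExtend_of_mem _ _ hu]; rfl
  have hFIoc : EqOn Ft 0 (Ioc 0 1) := by
    intro u hu
    have hu' : u ∈ Icc (0:ℝ) 1 := ⟨le_of_lt hu.1, hu.2⟩
    have h1 : G u = 0 := by rw [← hGeq u hu']; exact hG0 hu'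
    have h2 : F u / u ^ 2 = 0 := by rw [← hGF u hu]; exact h1
    have h3 : F u = 0 := by
      rcases div_eq_zero_iff.mp h2 with h | h
      · exact h
      · exact absurd h (pow_ne_zero 2 (ne_of_gt hu.1))
    rw [hFeq u hu']
    simpa using h3
  have hFcl : EqOn Ft 0 (Icc 0 1) := by
    have := hFIoc.closure hFtc continuous_const
    rwa [closure_Ioc (by norm_num : (0:ℝ) ≠ 1)] at this
  intro t ht
  rw [← hFeq t ht]
  exact hFcl ht
end

section
/- Let $K(s,t)$ be smooth on $[a,b]^2$ with $K(s,s) = 0$ for all $s$ and $\partial_s K(s,t)|_{t=s} \neq 0$ for all $s$. If $\varphi \in C([a,b])$ satisfies $\int_a^s K(s,t)\varphi(t)\,dt = 0$ for all $s \in [a,b]$, then $\varphi \equiv 0$. -/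
open MeasureTheory Set intervalIntegral Filter Topology

lemma prim_contOn {a b : ℝ} (hab : a ≤ b) {f : ℝ → ℝ} (hf : ContinuousOn f (Icc a b)) :
    ContinuousOn (fun x => ∫ t in a..x, f t) (Icc a b) := by
  have h : IntegrableOn f (uIcc a b) volume := by
    rw [uIcc_of_le hab]; exact hf.integrableOn_Icc
  simpa [uIcc_of_le hab] using continuousOn_primitive_interval h

lemma prim_hasDerivAt {a b : ℝ} {f : ℝ → ℝ} (hf : ContinuousOn f (Icc a b))
    {t : ℝ} (ht : t ∈ Ioo a b) :
    HasDerivAt (fun x => ∫ u in a..x, f u) (f t) t := by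
  have hmem : Icc a b ∈ 𝓝 t := Icc_mem_nhds ht.1 ht.2
  have hct : ContinuousAt f t := hf.continuousAt hmem
  have hint : IntervalIntegrable f volume a t := by
    apply ContinuousOn.intervalIntegrable
    apply hf.mono
    rw [uIcc_of_le ht.1.le]
    exact Icc_subset_Icc le_rfl ht.2.le
  exact integral_hasDerivAt_right hint ⟨Icc a b, hmem,
    hf.aestronglyMeasurable measurableSet_Icc⟩ hct

lemma prim_hasDerivWithinAt_Ici {a b : ℝ} {f : ℝ → ℝ} (hf : ContinuousOn f (Icc a b))
    {t : ℝ} (ht : t ∈ Ico a b) :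
    HasDerivWithinAt (fun x => ∫ u in a..x, f u) (f t) (Ici t) t := by
  have hmem : Icc a b ∈ 𝓝[Ici t] t := Icc_mem_nhdsGE_of_mem ht
  have hint : IntervalIntegrable f volume a t := by
    apply ContinuousOn.intervalIntegrable
    apply hf.mono
    rw [uIcc_of_le ht.1]
    exact Icc_subset_Icc le_rfl ht.2.le
  have hmem' : Icc a b ∈ 𝓝[>] t := Icc_mem_nhdsGT_of_mem ht
  exact integral_hasDerivWithinAt_right (t := Ioi t) hint
    ⟨Icc a b, hmem', hf.aestronglyMeasurable measurableSet_Icc⟩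
    (((hf t ⟨ht.1, ht.2.le⟩)).mono_of_mem_nhdsWithin hmem')

lemma eqOn_zero_of_primitive_zero {a b : ℝ} (hab : a < b) {f : ℝ → ℝ}
    (hf : ContinuousOn f (Icc a b)) (h : ∀ s ∈ Icc a b, ∫ t in a..s, f t = 0) :
    EqOn f 0 (Icc a b) := by
  have hIoo : ∀ t ∈ Ioo a b, f t = 0 := by
    intro t ht
    have hd := prim_hasDerivAt hf ht
    have h0 : (fun x => ∫ u in a..x, f u) =ᶠ[𝓝 t] fun _ => (0 : ℝ) :=
      eventually_of_mem (Icc_mem_nhds ht.1 ht.2) (fun x hx => h x hx)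
    have hd0 : HasDerivAt (fun x => ∫ u in a..x, f u) 0 t :=
      (hasDerivAt_const t (0 : ℝ)).congr_of_eventuallyEq h0
    exact hd.unique hd0
  refine Set.EqOn.of_subset_closure hIoo hf continuousOn_const Ioo_subset_Icc_self ?_
  rw [closure_Ioo hab.ne]

lemma contOn_snd {a b : ℝ} {W : ℝ × ℝ → ℝ}
    (hW : ContinuousOn W (Icc a b ×ˢ Icc a b)) {s : ℝ} (hs : s ∈ Icc a b) :
    ContinuousOn (fun t => W (s, t)) (Icc a b) :=
  hW.comp ((continuous_const.prodMk continuous_id).continuousOn) fun t ht => ⟨hs, ht⟩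

lemma hasDerivAt_snd {a b : ℝ} {W : ℝ × ℝ → ℝ}
    (hW : ContDiffOn ℝ (⊤ : ℕ∞) W (Icc a b ×ˢ Icc a b)) {s t : ℝ}
    (hs : s ∈ Icc a b) (ht : t ∈ Ioo a b) :
    HasDerivAt (fun y => W (s, y))
      (fderivWithin ℝ W (Icc a b ×ˢ Icc a b) (s, t) (0, 1)) t := by
  have htI : t ∈ Icc a b := Ioo_subset_Icc_self ht
  have hdiff : DifferentiableWithinAt ℝ W (Icc a b ×ˢ Icc a b) (s, t) :=
    hW.differentiableOn (by simp) _ ⟨hs, htI⟩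
  have hj : HasDerivAt (fun y : ℝ => ((s, y) : ℝ × ℝ)) (0, 1) t :=
    HasDerivAt.prodMk (hasDerivAt_const t s) (hasDerivAt_id t)
  have hcomp := hdiff.hasFDerivWithinAt.comp_hasDerivWithinAt t hj.hasDerivWithinAt
      (fun y hy => ⟨hs, hy⟩)
  exact hcomp.hasDerivAt (Icc_mem_nhds ht.1 ht.2)

noncomputable def pdt (a b : ℝ) (W : ℝ → ℝ → ℝ) : ℝ → ℝ → ℝ :=
  fun x y => fderivWithin ℝ (fun p : ℝ × ℝ => W p.1 p.2) (Icc a b ×ˢ Icc a b) (x, y) (0, 1)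

lemma pdt_contDiffOn {a b : ℝ} (hab : a < b) {W : ℝ → ℝ → ℝ}
    (hW : ContDiffOn ℝ (⊤ : ℕ∞) (fun p : ℝ × ℝ => W p.1 p.2) (Icc a b ×ˢ Icc a b)) :
    ContDiffOn ℝ (⊤ : ℕ∞) (fun p : ℝ × ℝ => pdt a b W p.1 p.2) (Icc a b ×ˢ Icc a b) := by
  have UDP : UniqueDiffOn ℝ (Icc a b ×ˢ Icc a b) :=
    (uniqueDiffOn_Icc hab).prod (uniqueDiffOn_Icc hab)
  have := (hW.fderivWithin (m := (⊤ : ℕ∞)) UDP (by simp)).clm_apply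
    (contDiffOn_const (c := ((0 : ℝ), (1 : ℝ))))
  simpa only [pdt, Prod.mk.eta] using this

lemma pdt_hasDerivAt {a b : ℝ} (hab : a < b) {W : ℝ → ℝ → ℝ}
    (hW : ContDiffOn ℝ (⊤ : ℕ∞) (fun p : ℝ × ℝ => W p.1 p.2) (Icc a b ×ˢ Icc a b))
    {s t : ℝ} (hs : s ∈ Icc a b) (ht : t ∈ Ioo a b) :
    HasDerivAt (fun y => W s y) (pdt a b W s t) t :=
  hasDerivAt_snd hW hs ht

lemma IBP {a b : ℝ} (hab : a < b) {W : ℝ → ℝ → ℝ}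
    (hW : ContDiffOn ℝ (⊤ : ℕ∞) (fun p : ℝ × ℝ => W p.1 p.2) (Icc a b ×ˢ Icc a b))
    {u u' : ℝ → ℝ} (huc : ContinuousOn u (Icc a b)) (hua : u a = 0)
    (hud : ∀ t ∈ Ioo a b, HasDerivAt u (u' t) t) (hu'c : ContinuousOn u' (Icc a b))
    {s : ℝ} (hs : s ∈ Icc a b) :
    (∫ t in a..s, W s t * u' t)
      = W s s * u s - ∫ t in a..s, pdt a b W s t * u t := by
  have has : a ≤ s := hs.1
  have hsub : Icc a s ⊆ Icc a b := Icc_subset_Icc le_rfl hs.2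
  have hWt : ContinuousOn (fun t => W s t) (Icc a b) := contOn_snd hW.continuousOn hs
  have hDt : ContinuousOn (fun t => pdt a b W s t) (Icc a b) :=
    contOn_snd (pdt_contDiffOn hab hW).continuousOn hs
  have hcont : ContinuousOn (fun t => W s t * u t) (Icc a s) :=
    (hWt.mono hsub).mul (huc.mono hsub)
  have hderiv : ∀ t ∈ Ioo a s, HasDerivWithinAt (fun t => W s t * u t)
      (pdt a b W s t * u t + W s t * u' t) (Ioi t) t := by
    intro t ht
    have ht' : t ∈ Ioo a b := ⟨ht.1, lt_of_lt_of_le ht.2 hs.2⟩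
    exact ((pdt_hasDerivAt hab hW hs ht').mul (hud t ht')).hasDerivWithinAt
  have hint1 : IntervalIntegrable (fun t => pdt a b W s t * u t) volume a s := by
    apply ContinuousOn.intervalIntegrable
    rw [uIcc_of_le has]
    exact (hDt.mono hsub).mul (huc.mono hsub)
  have hint2 : IntervalIntegrable (fun t => W s t * u' t) volume a s := by
    apply ContinuousOn.intervalIntegrable
    rw [uIcc_of_le has]
    exact (hWt.mono hsub).mul (hu'c.mono hsub)
  have hsum := integral_eq_sub_of_hasDeriv_right_of_le has hcont hderiv (hint1.add hint2)
  rw [integral_add hint1 hint2] at hsum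
  rw [hua, mul_zero, sub_zero] at hsum
  linarith

/-- Case `m = 2` of Lemma 2.6: kernel vanishing on the diagonal with
nonvanishing first `s`-derivative there. -/
theorem volterra_vanishing_diagonal {a b : ℝ} (hab : a < b) (K : ℝ → ℝ → ℝ)
    (hK : ContDiffOn ℝ (⊤ : ℕ∞) (fun p : ℝ × ℝ => K p.1 p.2) (Icc a b ×ˢ Icc a b))
    (hdiag : ∀ s ∈ Icc a b, K s s = 0)
    (hder : ∀ s ∈ Icc a b, deriv (fun x => K x s) s ≠ 0)
    (φ : ℝ → ℝ) (hφ : ContinuousOn φ (Icc a b))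
    (heq : ∀ s ∈ Icc a b, ∫ t in a..s, K s t * φ t = 0) :
    EqOn φ 0 (Icc a b) := by
  have hab' : a ≤ b := hab.le
  have UD : UniqueDiffOn ℝ (Icc a b) := uniqueDiffOn_Icc hab
  have hG : ContDiffOn ℝ (⊤ : ℕ∞) (fun p : ℝ × ℝ => pdt a b K p.1 p.2) (Icc a b ×ˢ Icc a b) :=
    pdt_contDiffOn hab hK
  have hψc : ContinuousOn (fun x => ∫ u in a..x, φ u) (Icc a b) := prim_contOn hab' hφ
  have hΨc : ContinuousOn (fun x => ∫ t in a..x, ∫ u in a..t, φ u) (Icc a b) :=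
    prim_contOn hab' hψc
  -- Step 1 : ∫ ∂ₜK(s,t) ψ(t) dt = 0
  have step1 : ∀ s ∈ Icc a b, (∫ t in a..s, pdt a b K s t * ∫ u in a..t, φ u) = 0 := by
    intro s hs
    have h1 : (∫ t in a..s, K s t * φ t)
        = K s s * (∫ u in a..s, φ u) - ∫ t in a..s, pdt a b K s t * ∫ u in a..t, φ u :=
      IBP hab hK hψc integral_same (fun t ht => prim_hasDerivAt hφ ht) hφ hs
    rw [heq s hs, hdiag s hs, zero_mul, zero_sub] at h1
    linarith
  -- Step 2 : ∂ₜK(s,s) Ψ(s) = ∫ ∂ₜ²K(s,t) Ψ(t) dt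
  have step2 : ∀ s ∈ Icc a b,
      pdt a b K s s * (∫ t in a..s, ∫ u in a..t, φ u)
        = ∫ t in a..s, pdt a b (pdt a b K) s t * ∫ u in a..t, ∫ v in a..u, φ v := by
    intro s hs
    have h1 : (∫ t in a..s, pdt a b K s t * ∫ u in a..t, φ u)
        = pdt a b K s s * (∫ t in a..s, ∫ u in a..t, φ u)
          - ∫ t in a..s, pdt a b (pdt a b K) s t * ∫ u in a..t, ∫ v in a..u, φ v :=
      IBP hab hG hΨc integral_same (fun t ht => prim_hasDerivAt hψc ht) hψc hs
    rw [step1 s hs] at h1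
    linarith
  -- the diagonal value of ∂ₜK
  have hGdiag : ∀ s ∈ Icc a b, pdt a b K s s = -deriv (fun x => K x s) s := by
    intro s hs
    have hdiffF : DifferentiableWithinAt ℝ (fun p : ℝ × ℝ => K p.1 p.2)
        (Icc a b ×ˢ Icc a b) (s, s) := hK.differentiableOn (by simp) _ ⟨hs, hs⟩
    have hfd := hdiffF.hasFDerivWithinAt
    have hmap1 : MapsTo (fun x : ℝ => ((x, s) : ℝ × ℝ)) (Icc a b) (Icc a b ×ˢ Icc a b) :=
      fun x hx => ⟨hx, hs⟩
    have hmap2 : MapsTo (fun x : ℝ => ((x, x) : ℝ × ℝ)) (Icc a b) (Icc a b ×ˢ Icc a b) :=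
      fun x hx => ⟨hx, hx⟩
    have hj1 : HasDerivAt (fun x : ℝ => ((x, s) : ℝ × ℝ)) (1, 0) s :=
      HasDerivAt.prodMk (hasDerivAt_id s) (hasDerivAt_const s s)
    have h1pre := HasFDerivWithinAt.comp_hasDerivWithinAt (f := fun x : ℝ => ((x, s) : ℝ × ℝ)) s hfd hj1.hasDerivWithinAt hmap1
    have h1 : HasDerivWithinAt (fun x => K x s)
        (fderivWithin ℝ (fun p : ℝ × ℝ => K p.1 p.2) (Icc a b ×ˢ Icc a b) (s, s) (1, 0))
        (Icc a b) s := h1pre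
    have hdiffK : DifferentiableAt ℝ (fun x => K x s) s := by
      by_contra hcon
      exact hder s hs (deriv_zero_of_not_differentiableAt hcon)
    have h1' : HasDerivWithinAt (fun x => K x s) (deriv (fun x => K x s) s) (Icc a b) s :=
      hdiffK.hasDerivAt.hasDerivWithinAt
    have e1 : fderivWithin ℝ (fun p : ℝ × ℝ => K p.1 p.2) (Icc a b ×ˢ Icc a b) (s, s) (1, 0)
        = deriv (fun x => K x s) s := by
      rw [← h1.derivWithin (UD s hs), h1'.derivWithin (UD s hs)]
    have hj2 : HasDerivAt (fun x : ℝ => ((x, x) : ℝ × ℝ)) (1, 1) s :=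
      HasDerivAt.prodMk (hasDerivAt_id s) (hasDerivAt_id s)
    have h2pre := HasFDerivWithinAt.comp_hasDerivWithinAt (f := fun x : ℝ => ((x, x) : ℝ × ℝ)) s hfd hj2.hasDerivWithinAt hmap2
    have h2 : HasDerivWithinAt (fun x => K x x)
        (fderivWithin ℝ (fun p : ℝ × ℝ => K p.1 p.2) (Icc a b ×ˢ Icc a b) (s, s) (1, 1))
        (Icc a b) s := h2pre
    have h2' : HasDerivWithinAt (fun x => K x x) (0 : ℝ) (Icc a b) s :=
      (hasDerivWithinAt_const s (Icc a b) (0 : ℝ)).congr (fun x hx => hdiag x hx) (hdiag s hs)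
    have e2 : fderivWithin ℝ (fun p : ℝ × ℝ => K p.1 p.2) (Icc a b ×ˢ Icc a b) (s, s)
        ((1 : ℝ), (1 : ℝ)) = 0 := by
      rw [← h2.derivWithin (UD s hs), h2'.derivWithin (UD s hs)]
    have e3 : fderivWithin ℝ (fun p : ℝ × ℝ => K p.1 p.2) (Icc a b ×ˢ Icc a b) (s, s)
          ((1 : ℝ), (1 : ℝ))
        = fderivWithin ℝ (fun p : ℝ × ℝ => K p.1 p.2) (Icc a b ×ˢ Icc a b) (s, s) (1, 0)
          + fderivWithin ℝ (fun p : ℝ × ℝ => K p.1 p.2) (Icc a b ×ˢ Icc a b) (s, s) (0, 1) := by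
      rw [← map_add]
      norm_num
    show fderivWithin ℝ (fun p : ℝ × ℝ => K p.1 p.2) (Icc a b ×ˢ Icc a b) (s, s) (0, 1) = _
    rw [← e1]
    linarith [e2, e3]
  have hGne : ∀ s ∈ Icc a b, pdt a b K s s ≠ 0 := by
    intro s hs
    rw [hGdiag s hs]
    simpa using hder s hs
  -- bounds
  obtain ⟨M, hM⟩ := (isCompact_Icc.prod isCompact_Icc).exists_bound_of_continuousOn
    (pdt_contDiffOn hab hG).continuousOn
  have hdc : ContinuousOn (fun s => pdt a b K s s) (Icc a b) :=
    hG.continuousOn.comp ((continuous_id.prodMk continuous_id).continuousOn)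
      (fun s hs => ⟨hs, hs⟩)
  obtain ⟨s₀, hs₀, hmin⟩ := isCompact_Icc.exists_isMinOn (nonempty_Icc.mpr hab') hdc.norm
  have hm : 0 < ‖pdt a b K s₀ s₀‖ := norm_pos_iff.mpr (hGne s₀ hs₀)
  set m : ℝ := ‖pdt a b K s₀ s₀‖ with hmdef
  have hmle : ∀ s ∈ Icc a b, m ≤ ‖pdt a b K s s‖ := fun s hs => (isMinOn_iff.mp hmin) s hs
  -- key Volterra inequality
  have key : ∀ s ∈ Icc a b, ‖∫ t in a..s, ∫ u in a..t, φ u‖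
      ≤ (M / m) * ∫ t in a..s, ‖∫ u in a..t, ∫ v in a..u, φ v‖ := by
    intro s hs
    have has : a ≤ s := hs.1
    have hsub : Icc a s ⊆ Icc a b := Icc_subset_Icc le_rfl hs.2
    have hHt : ContinuousOn (fun t => pdt a b (pdt a b K) s t) (Icc a b) :=
      contOn_snd (pdt_contDiffOn hab hG).continuousOn hs
    have hint1 : IntervalIntegrable
        (fun t => ‖pdt a b (pdt a b K) s t * ∫ u in a..t, ∫ v in a..u, φ v‖) volume a s := by
      apply ContinuousOn.intervalIntegrable
      rw [uIcc_of_le has]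
      exact ((hHt.mono hsub).mul (hΨc.mono hsub)).norm
    have hint2 : IntervalIntegrable
        (fun t => M * ‖∫ u in a..t, ∫ v in a..u, φ v‖) volume a s := by
      apply ContinuousOn.intervalIntegrable
      rw [uIcc_of_le has]
      exact continuousOn_const.mul (hΨc.mono hsub).norm
    have habs : ‖∫ t in a..s, pdt a b (pdt a b K) s t * ∫ u in a..t, ∫ v in a..u, φ v‖
        ≤ ∫ t in a..s, ‖pdt a b (pdt a b K) s t * ∫ u in a..t, ∫ v in a..u, φ v‖ :=
      intervalIntegral.norm_integral_le_integral_norm has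
    have hmono : (∫ t in a..s, ‖pdt a b (pdt a b K) s t * ∫ u in a..t, ∫ v in a..u, φ v‖)
        ≤ ∫ t in a..s, M * ‖∫ u in a..t, ∫ v in a..u, φ v‖ := by
      apply intervalIntegral.integral_mono_on has hint1 hint2
      intro t ht
      rw [norm_mul]
      exact mul_le_mul_of_nonneg_right (hM (s, t) ⟨hs, hsub ht⟩) (norm_nonneg _)
    rw [intervalIntegral.integral_const_mul] at hmono
    have hls : m * ‖∫ t in a..s, ∫ u in a..t, φ u‖
        ≤ M * ∫ t in a..s, ‖∫ u in a..t, ∫ v in a..u, φ v‖ := by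
      calc m * ‖∫ t in a..s, ∫ u in a..t, φ u‖
          ≤ ‖pdt a b K s s‖ * ‖∫ t in a..s, ∫ u in a..t, φ u‖ :=
            mul_le_mul_of_nonneg_right (hmle s hs) (norm_nonneg _)
        _ = ‖pdt a b K s s * ∫ t in a..s, ∫ u in a..t, φ u‖ := (norm_mul _ _).symm
        _ = ‖∫ t in a..s, pdt a b (pdt a b K) s t * ∫ u in a..t, ∫ v in a..u, φ v‖ := by
            rw [step2 s hs]
        _ ≤ M * ∫ t in a..s, ‖∫ u in a..t, ∫ v in a..u, φ v‖ := le_trans habs hmono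
    rw [div_mul_eq_mul_div, le_div_iff₀ hm]
    nlinarith [hls]
  -- Grönwall
  have hnorm : ContinuousOn (fun t => ‖∫ u in a..t, ∫ v in a..u, φ v‖) (Icc a b) := hΨc.norm
  have hgc : ContinuousOn (fun x => ∫ t in a..x, ‖∫ u in a..t, ∫ v in a..u, φ v‖) (Icc a b) :=
    prim_contOn hab' hnorm
  have hgron := norm_le_gronwallBound_of_norm_deriv_right_le (δ := 0) (K := M / m) (ε := 0)
    hgc (fun x hx => prim_hasDerivWithinAt_Ici hnorm hx) (by simp)
    (fun x hx => by
      have hx' : x ∈ Icc a b := Ico_subset_Icc_self hx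
      have hg0 : 0 ≤ ∫ t in a..x, ‖∫ u in a..t, ∫ v in a..u, φ v‖ :=
        intervalIntegral.integral_nonneg hx.1 (fun t _ => norm_nonneg _)
      rw [norm_norm, Real.norm_of_nonneg hg0, add_zero]
      exact key x hx')
  have hΨ0 : ∀ s ∈ Icc a b, (∫ t in a..s, ∫ u in a..t, φ u) = 0 := by
    intro s hs
    have h1 := hgron s hs
    rw [gronwallBound_ε0] at h1
    simp only [zero_mul] at h1
    have hg0 : (∫ t in a..s, ‖∫ u in a..t, ∫ v in a..u, φ v‖) = 0 := by
      have := norm_le_zero_iff.mp h1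
      exact this
    have h2 := key s hs
    rw [hg0, mul_zero] at h2
    exact norm_le_zero_iff.mp h2
  have hψ0 : EqOn (fun x => ∫ u in a..x, φ u) 0 (Icc a b) :=
    eqOn_zero_of_primitive_zero hab hψc hΨ0
  exact eqOn_zero_of_primitive_zero hab hφ (fun s hs => hψ0 hs)
end
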